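/- arXiv:1407.4238 — 4 statements merged into one kernel-verified Lean document; each statement's English description precedes it below -/
import Mathlib

section
/- The number of semistandard Young tableaux of a fixed skew shape λ/μ with entries in {1,…,n} and fixed weight is invariant under permuting the entries of the weight vector; equivalently, the skew Schur polynomial s_{λ/μ}(x_1,…,x_n) is a symmetric polynomial. -/
/-!
A tableau is recorded by its skew Gelfand–Tsetlin pattern `g`: `g k i` is `μ_i` plus the number
of entries `< k` in row `i`. Then `g 0 = μ`, `g k = λ` for `k ≥ n`, consecutive levels interlace
(column strictness), and the weight of `k` is the growth of the level sum from `k` to `k + 1`.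

Given levels `m` and `m + 2`, the admissible values of level `m + 1` in row `i` form an interval
`[bkLower i, bkUpper i]`, and the Bender–Knuth involution reflects level `m + 1` inside these
intervals. As `∑ (bkLower + bkUpper) = ∑ g m + ∑ g (m + 2)`, the reflection exchanges the weights
of `m` and `m + 1`; adjacent transpositions generate the symmetric group.
-/

namespace KP

variable (n : ℕ)

/-- Semistandard skew tableau of shape `lam/mu` (partitions as lists of row lengths). -/
def IsSkewSSYT (lam mu : List ℕ) (T : List (List (Fin n))) : Prop :=
  T.length = lam.length ∧
  (∀ i : ℕ, (T.getD i []).length = lam.getD i 0 - mu.getD i 0) ∧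
  (∀ i : ℕ, (T.getD i []).Pairwise (· ≤ ·)) ∧
  ∀ i j : ℕ, mu.getD i 0 ≤ j → mu.getD (i+1) 0 ≤ j →
    ∀ x ∈ (T.getD i [])[j - mu.getD i 0]?,
    ∀ y ∈ (T.getD (i+1) [])[j - mu.getD (i+1) 0]?, x < y

/-- The weight (content) of a tableau. -/
def wtT (T : List (List (Fin n))) : Fin n → ℕ := fun k => T.flatten.count k

section

variable {n}

theorem _root_.List.sum_map_eq_sum_range_getD {α : Type*} (T : List α) (d : α) (f : α → ℕ) :
    (T.map f).sum = ∑ i ∈ Finset.range T.length, f (T.getD i d) := by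
  induction T with
  | nil => simp
  | cons R T ih =>
    rw [List.map_cons, List.sum_cons, ih, List.length_cons, Finset.sum_range_succ']
    simp only [List.getD_cons_succ, List.getD_cons_zero]
    omega

theorem _root_.List.getD_succ_le_of_pairwise_ge {l : List ℕ} (hl : l.Pairwise (· ≥ ·)) (i : ℕ) :
    l.getD (i + 1) 0 ≤ l.getD i 0 := by
  by_cases h : i + 1 < l.length
  · rw [List.getD_eq_getElem l 0 h, List.getD_eq_getElem l 0 (by omega)]
    exact List.pairwise_iff_getElem.mp hl i (i + 1) (by omega) h (by omega)
  · rw [List.getD_eq_default l 0 (by omega)]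
    exact Nat.zero_le _

theorem _root_.List.Pairwise.apply_getElem_iff_lt_countP {α : Type*} [Preorder α] {L : List α}
    (hL : L.Pairwise (· ≤ ·)) {p : α → Bool} (hp : Antitone p)
    {i : ℕ} (hi : i < L.length) : p L[i] ↔ i < L.countP p := by
  induction L generalizing i with
  | nil => simp at hi
  | cons a L ih =>
    obtain ⟨ha, hL⟩ := List.pairwise_cons.mp hL
    by_cases hpa : p a
    · rw [List.countP_cons_of_pos hpa]
      cases i with
      | zero => simpa using hpa
      | succ i => simpa using ih hL (by simpa using hi)
    · have hnot : ∀ b ∈ a :: L, ¬ p b := by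
        simp only [List.mem_cons, forall_eq_or_imp]
        exact ⟨hpa, fun b hb hpb => hpa (Bool.le_iff_imp.mp (hp (ha b hb)) hpb)⟩
      rw [List.countP_eq_zero.mpr hnot]
      simpa using hnot _ (List.getElem_mem hi)

theorem exists_pairwise_le_count_eq {α : Type*} [LinearOrder α] [Fintype α] (c : α → ℕ) :
    ∃ L : List α, L.Pairwise (· ≤ ·) ∧ ∀ x, L.count x = c x := by
  refine ⟨(Finsupp.equivFunOnFinite.symm c).toMultiset.sort (· ≤ ·),
    Multiset.pairwise_sort _ _, fun x => ?_⟩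
  rw [← Multiset.coe_count, Multiset.sort_eq, Finsupp.count_toMultiset]
  rfl

def countBelow (k : ℕ) (L : List (Fin n)) : ℕ :=
  L.countP fun b : Fin n => decide ((b : ℕ) < k)

theorem countBelow_zero (L : List (Fin n)) : countBelow 0 L = 0 := by
  simp [countBelow]

theorem countBelow_mono (L : List (Fin n)) {k k' : ℕ} (h : k ≤ k') :
    countBelow k L ≤ countBelow k' L :=
  List.countP_mono_left fun b _ hb => by simp only [decide_eq_true_eq] at *; omega

theorem countBelow_le_length (k : ℕ) (L : List (Fin n)) : countBelow k L ≤ L.length :=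
  List.countP_le_length

theorem countBelow_of_le (L : List (Fin n)) {k : ℕ} (hk : n ≤ k) :
    countBelow k L = L.length :=
  List.countP_eq_length.mpr fun b _ => by simpa using b.isLt.trans_le hk

theorem countBelow_succ (L : List (Fin n)) (x : Fin n) :
    countBelow (x + 1) L = countBelow x L + L.count x := by
  induction L with
  | nil => rfl
  | cons a L ih =>
    simp only [countBelow, List.countP_cons, List.count_cons] at ih ⊢
    rw [ih]
    simp only [decide_eq_true_eq, beq_iff_eq, Fin.ext_iff]
    split_ifs <;> omega

theorem getElem_lt_iff_lt_countBelow {L : List (Fin n)} (hL : L.Pairwise (· ≤ ·))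
    {i : ℕ} (hi : i < L.length) (k : ℕ) : (L[i] : ℕ) < k ↔ i < countBelow k L := by
  simpa [countBelow] using hL.apply_getElem_iff_lt_countP
    (p := fun b : Fin n => decide ((b : ℕ) < k))
    (fun a b hab => Bool.le_iff_imp.mpr fun hb => by simp at *; exact lt_of_le_of_lt hab hb) hi

section ColumnStrict

variable {R Q : List (Fin n)} {a b : ℕ}

theorem colStrict_of_countBelow_le (hR : R.Pairwise (· ≤ ·)) (hQ : Q.Pairwise (· ≤ ·))
    (h : ∀ k, b + countBelow (k + 1) Q ≤ a + countBelow k R) :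
    ∀ j, a ≤ j → b ≤ j → ∀ x ∈ R[j - a]?, ∀ y ∈ Q[j - b]?, x < y := by
  intro j haj hbj x hx y hy
  obtain ⟨hjR, rfl⟩ := List.getElem?_eq_some_iff.mp hx
  obtain ⟨hjQ, rfl⟩ := List.getElem?_eq_some_iff.mp hy
  by_contra! hyx
  have hQy := (getElem_lt_iff_lt_countBelow hQ hjQ (Q[j - b] + 1)).mp (Nat.lt_succ_self _)
  have hRy := (getElem_lt_iff_lt_countBelow hR hjR Q[j - b]).not.mp (not_lt.mpr hyx)
  have := h Q[j - b]
  omega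

theorem countBelow_le_of_colStrict (hR : R.Pairwise (· ≤ ·)) (hQ : Q.Pairwise (· ≤ ·))
    (hab : b ≤ a) (hlen : b + Q.length ≤ a + R.length)
    (hcol : ∀ j, a ≤ j → b ≤ j → ∀ x ∈ R[j - a]?, ∀ y ∈ Q[j - b]?, x < y) (k : ℕ) :
    b + countBelow (k + 1) Q ≤ a + countBelow k R := by
  by_contra! hlt
  set p := countBelow k R
  have hpR : p < R.length := by
    have := countBelow_le_length (k + 1) Q
    have := countBelow_le_length k R
    omega
  have hqQ : a + p - b < Q.length := by
    have := countBelow_le_length (k + 1) Q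
    omega
  have hx := (getElem_lt_iff_lt_countBelow hR hpR k).not.mpr (lt_irrefl p)
  have hy := (getElem_lt_iff_lt_countBelow hQ hqQ (k + 1)).mpr (by omega)
  have hxy :=
    hcol (a + p) (by omega) (by omega) R[p] (by simp [hpR]) _ (List.getElem?_eq_getElem hqQ)
  rw [Fin.lt_def] at hxy
  omega

end ColumnStrict

structure IsSkewGTPattern (n : ℕ) (lam mu : List ℕ) (g : ℕ → ℕ → ℕ) : Prop where
  bottom : ∀ i, g 0 i = mu.getD i 0
  top : ∀ k, n ≤ k → ∀ i, g k i = lam.getD i 0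
  mono : ∀ k i, g k i ≤ g (k + 1) i
  interlace : ∀ k i, g (k + 1) (i + 1) ≤ g k i

def skewGTPatterns (lam mu : List ℕ) (w : Fin n → ℕ) : Set (ℕ → ℕ → ℕ) :=
  {g | IsSkewGTPattern n lam mu g ∧ ∀ k : Fin n,
    w k + ∑ i ∈ Finset.range lam.length, g k i = ∑ i ∈ Finset.range lam.length, g (k + 1) i}

theorem IsSkewGTPattern.eq_zero_of_length_le {lam mu : List ℕ} {g : ℕ → ℕ → ℕ}
    (hg : IsSkewGTPattern n lam mu g) (k : ℕ) {i : ℕ} (hi : lam.length ≤ i) : g k i = 0 := by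
  have : g k i ≤ g (max k n) i := monotone_nat_of_le_succ (hg.mono · i) (le_max_left k n)
  rw [hg.top _ (le_max_right k n), List.getD_eq_default _ _ hi] at this
  omega

section BenderKnuth

def bkLower (d u : ℕ → ℕ) (i : ℕ) : ℕ := max (d i) (u (i + 1))

def bkUpper (d u : ℕ → ℕ) : ℕ → ℕ
  | 0 => u 0
  | i + 1 => min (d i) (u (i + 1))

theorem sum_bkLower_add_sum_bkUpper (d u : ℕ → ℕ) (N : ℕ) :
    ∑ i ∈ Finset.range N, bkLower d u i + ∑ i ∈ Finset.range (N + 1), bkUpper d u i =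
      ∑ i ∈ Finset.range N, d i + ∑ i ∈ Finset.range (N + 1), u i := by
  induction N with
  | zero => rfl
  | succ N ih =>
    have : bkLower d u N + bkUpper d u (N + 1) = d N + u (N + 1) := max_add_min _ _
    rw [Finset.sum_range_succ _ N, Finset.sum_range_succ (bkUpper d u), Finset.sum_range_succ d,
      Finset.sum_range_succ u (N + 1)]
    omega

theorem bkUpper_eq_zero (d : ℕ → ℕ) {u : ℕ → ℕ} {N : ℕ} (hN : u N = 0) : bkUpper d u N = 0 := by
  cases N <;> simp [bkUpper, hN]

def benderKnuth (m : ℕ) (g : ℕ → ℕ → ℕ) : ℕ → ℕ → ℕ :=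
  Function.update g (m + 1) fun i =>
    bkLower (g m) (g (m + 2)) i + bkUpper (g m) (g (m + 2)) i - g (m + 1) i

variable {lam mu : List ℕ} {g : ℕ → ℕ → ℕ} {m : ℕ}

theorem IsSkewGTPattern.bkLower_le (hg : IsSkewGTPattern n lam mu g) (i : ℕ) :
    bkLower (g m) (g (m + 2)) i ≤ g (m + 1) i :=
  max_le (hg.mono m i) (hg.interlace (m + 1) i)

theorem IsSkewGTPattern.le_bkUpper (hg : IsSkewGTPattern n lam mu g) (i : ℕ) :
    g (m + 1) i ≤ bkUpper (g m) (g (m + 2)) i := by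
  cases i with
  | zero => exact hg.mono (m + 1) 0
  | succ i => exact le_min (hg.interlace m i) (hg.mono (m + 1) (i + 1))

theorem IsSkewGTPattern.update (hg : IsSkewGTPattern n lam mu g) (hm : m + 2 ≤ n) {f : ℕ → ℕ}
    (hlo : ∀ i, bkLower (g m) (g (m + 2)) i ≤ f i) (hhi : ∀ i, f i ≤ bkUpper (g m) (g (m + 2)) i) :
    IsSkewGTPattern n lam mu (Function.update g (m + 1) f) := by
  have hfu : ∀ i, f i ≤ g (m + 2) i := fun i => (hhi i).trans (by cases i <;> simp [bkUpper])
  have hfd : ∀ i, f (i + 1) ≤ g m i := fun i => (hhi (i + 1)).trans (min_le_left _ _)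
  have hlo' : ∀ i, g m i ≤ f i ∧ g (m + 2) (i + 1) ≤ f i := fun i => max_le_iff.mp (hlo i)
  constructor
  · intro i; simp [hg.bottom]
  · intro k hk i
    rw [Function.update_of_ne (by omega), hg.top k hk]
  · intro k i
    simp only [Function.update_apply]
    split_ifs with h1 h2 h2
    · omega
    · subst h1; exact hfu i
    · cases h2; exact (hlo' i).1
    · exact hg.mono k i
  · intro k i
    simp only [Function.update_apply]
    split_ifs with h1 h2 h2
    · omega
    · obtain rfl : k = m := by omega
      exact hfd i
    · subst h2; exact (hlo' i).2
    · exact hg.interlace k i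

theorem isSkewGTPattern_benderKnuth (hg : IsSkewGTPattern n lam mu g) (hm : m + 2 ≤ n) :
    IsSkewGTPattern n lam mu (benderKnuth m g) := by
  have hlo := hg.bkLower_le (m := m)
  have hhi := hg.le_bkUpper (m := m)
  exact hg.update hm (fun i => by have := hlo i; have := hhi i; omega)
    (fun i => by have := hlo i; have := hhi i; omega)

theorem benderKnuth_of_ne (g : ℕ → ℕ → ℕ) {k : ℕ} (hk : k ≠ m + 1) : benderKnuth m g k = g k :=
  Function.update_of_ne hk _ _

theorem benderKnuth_succ_add (hg : IsSkewGTPattern n lam mu g) (i : ℕ) :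
    benderKnuth m g (m + 1) i + g (m + 1) i =
      bkLower (g m) (g (m + 2)) i + bkUpper (g m) (g (m + 2)) i := by
  have := hg.bkLower_le (m := m) i
  have := hg.le_bkUpper (m := m) i
  simp only [benderKnuth, Function.update_self]
  omega

theorem benderKnuth_benderKnuth (hg : IsSkewGTPattern n lam mu g) :
    benderKnuth m (benderKnuth m g) = g := by
  ext k i
  by_cases hk : k = m + 1
  · subst hk
    have hbk := benderKnuth_succ_add (m := m) hg i
    rw [benderKnuth, Function.update_self, benderKnuth_of_ne g (by omega),
      benderKnuth_of_ne g (by omega)]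
    omega
  · rw [benderKnuth_of_ne _ hk, benderKnuth_of_ne _ hk]

theorem sum_benderKnuth_add_sum (hg : IsSkewGTPattern n lam mu g) :
    ∑ i ∈ Finset.range lam.length, benderKnuth m g (m + 1) i +
        ∑ i ∈ Finset.range lam.length, g (m + 1) i =
      ∑ i ∈ Finset.range lam.length, g m i + ∑ i ∈ Finset.range lam.length, g (m + 2) i := by
  have hN := hg.eq_zero_of_length_le (m + 2) le_rfl
  have hsum := sum_bkLower_add_sum_bkUpper (g m) (g (m + 2)) lam.length
  rw [Finset.sum_range_succ (bkUpper _ _), Finset.sum_range_succ (g (m + 2)), hN,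
    bkUpper_eq_zero _ hN] at hsum
  rw [← Finset.sum_add_distrib, Finset.sum_congr rfl fun i _ => benderKnuth_succ_add hg i,
    Finset.sum_add_distrib]
  simpa using hsum

theorem benderKnuth_mem_skewGTPatterns {w : Fin n → ℕ} (hg : g ∈ skewGTPatterns lam mu w)
    {a b : Fin n} (hab : (b : ℕ) = a + 1) :
    benderKnuth a g ∈ skewGTPatterns lam mu (w ∘ Equiv.swap a b) := by
  obtain ⟨hpat, hw⟩ := hg
  refine ⟨isSkewGTPattern_benderKnuth hpat (by omega), fun k => ?_⟩
  have hbk := sum_benderKnuth_add_sum (m := a) hpat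
  have hwa := hw a
  have hwb : w b + ∑ i ∈ Finset.range lam.length, g (a + 1) i =
      ∑ i ∈ Finset.range lam.length, g (a + 2) i := by
    have := hw b
    rw [hab] at this
    exact this
  have hfix : ∀ l ≠ (a : ℕ) + 1, benderKnuth a g l = g l := fun l hl => benderKnuth_of_ne g hl
  rw [Function.comp_apply]
  by_cases hka : k = a
  · subst hka
    rw [Equiv.swap_apply_left, hfix k (by omega)]
    omega
  by_cases hkb : k = b
  · subst hkb
    rw [Equiv.swap_apply_right, hab, hfix (a + 2) (by omega)]
    omega
  · have hka' : (k : ℕ) ≠ a := fun h => hka (Fin.ext h)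
    have hkb' : (k : ℕ) ≠ b := fun h => hkb (Fin.ext h)
    rw [Equiv.swap_apply_of_ne_of_ne hka hkb, hfix k (by omega), hfix (k + 1) (by omega)]
    exact hw k

end BenderKnuth

theorem ncard_skewGTPatterns_comp_swap (lam mu : List ℕ) (w : Fin n → ℕ) {a b : Fin n}
    (hab : (b : ℕ) = a + 1) :
    (skewGTPatterns lam mu w).ncard = (skewGTPatterns lam mu (w ∘ Equiv.swap a b)).ncard := by
  refine Set.BijOn.ncard_eq (f := benderKnuth a) (Set.InvOn.bijOn (f' := benderKnuth a) ?_ ?_ ?_)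
  · exact ⟨fun g hg => benderKnuth_benderKnuth hg.1, fun g hg => benderKnuth_benderKnuth hg.1⟩
  · exact fun g hg => benderKnuth_mem_skewGTPatterns hg hab
  · intro g hg
    simpa [Function.comp_def] using benderKnuth_mem_skewGTPatterns hg hab

theorem ncard_skewGTPatterns_comp_perm (lam mu : List ℕ) (w : Fin n → ℕ) (σ : Equiv.Perm (Fin n)) :
    (skewGTPatterns lam mu w).ncard = (skewGTPatterns lam mu (w ∘ σ)).ncard := by
  obtain _ | n := n
  · rw [Subsingleton.elim σ 1]
    rfl
  have hσ : σ ∈ Submonoid.closure (Set.range fun i : Fin n => Equiv.swap i.castSucc i.succ) := by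
    rw [Equiv.Perm.mclosure_swap_castSucc_succ]
    trivial
  induction hσ using Submonoid.closure_induction generalizing w with
  | mem _ h =>
    obtain ⟨i, rfl⟩ := h
    exact ncard_skewGTPatterns_comp_swap lam mu w (by simp)
  | one => rfl
  | mul σ τ _ _ hσ hτ => rw [hσ w, hτ (w ∘ σ)]; rfl

def toPattern (mu : List ℕ) (T : List (List (Fin n))) : ℕ → ℕ → ℕ :=
  fun k i => mu.getD i 0 + countBelow k (T.getD i [])

theorem wtT_add_sum_toPattern (mu : List ℕ) (T : List (List (Fin n))) (k : Fin n) :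
    wtT n T k + ∑ i ∈ Finset.range T.length, toPattern mu T k i =
      ∑ i ∈ Finset.range T.length, toPattern mu T (k + 1) i := by
  rw [wtT, List.count_flatten, List.sum_map_eq_sum_range_getD T [], ← Finset.sum_add_distrib]
  refine Finset.sum_congr rfl fun i _ => ?_
  rw [toPattern, toPattern, countBelow_succ]
  ring

section Tableaux

variable {lam mu : List ℕ}

theorem isSkewGTPattern_toPattern (hlam : lam.Pairwise (· ≥ ·)) (hmu : mu.Pairwise (· ≥ ·))
    (hsub : ∀ i, mu.getD i 0 ≤ lam.getD i 0) {T : List (List (Fin n))}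
    (hT : IsSkewSSYT n lam mu T) : IsSkewGTPattern n lam mu (toPattern mu T) := by
  obtain ⟨-, hrow, hsort, hcol⟩ := hT
  refine ⟨fun i => ?_, fun k hk i => ?_, fun k i => ?_, fun k i => ?_⟩
  · simp [toPattern, countBelow_zero]
  · rw [toPattern, countBelow_of_le _ hk, hrow]
    have := hsub i
    omega
  · exact Nat.add_le_add_left (countBelow_mono _ k.le_succ) _
  · have hl := lam.getD_succ_le_of_pairwise_ge hlam i
    have := hsub (i + 1)
    exact countBelow_le_of_colStrict (hsort i) (hsort (i + 1))
      (mu.getD_succ_le_of_pairwise_ge hmu i)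
      (by rw [hrow, hrow]; omega) (hcol i) k

theorem isSkewSSYT_of_toPattern {T : List (List (Fin n))} (hlen : T.length = lam.length)
    (hsort : ∀ i, (T.getD i []).Pairwise (· ≤ ·)) (hg : IsSkewGTPattern n lam mu (toPattern mu T)) :
    IsSkewSSYT n lam mu T := by
  refine ⟨hlen, fun i => ?_, hsort, fun i => ?_⟩
  · have := hg.top n le_rfl i
    rw [toPattern, countBelow_of_le _ le_rfl] at this
    omega
  · exact colStrict_of_countBelow_le (hsort i) (hsort (i + 1)) (hg.interlace · i)

theorem injOn_toPattern :
    Set.InjOn (toPattern mu) {T : List (List (Fin n)) | IsSkewSSYT n lam mu T} := by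
  intro T hT T' hT' h
  have hrow : ∀ i, T.getD i [] = T'.getD i [] := fun i =>
    List.Perm.eq_of_pairwise' (hT.2.2.1 i) (hT'.2.2.1 i) <| List.perm_iff_count.mpr fun x => by
      have h1 := congrFun (congrFun h (x + 1)) i
      have h0 := congrFun (congrFun h x) i
      simp only [toPattern, countBelow_succ] at h1 h0
      omega
  refine List.ext_getElem (hT.1.trans hT'.1.symm) fun i h1 h2 => ?_
  have := hrow i
  rwa [List.getD_eq_getElem _ _ h1, List.getD_eq_getElem _ _ h2] at this

theorem exists_toPattern_eq {g : ℕ → ℕ → ℕ} (hg : IsSkewGTPattern n lam mu g) :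
    ∃ T : List (List (Fin n)), T.length = lam.length ∧
      (∀ i, (T.getD i []).Pairwise (· ≤ ·)) ∧ toPattern mu T = g := by
  choose row hsorted hcount using
    fun i => exists_pairwise_le_count_eq fun x : Fin n => g (x + 1) i - g x i
  set T := (List.range lam.length).map row
  have hT : ∀ i, T.getD i [] = if i < lam.length then row i else [] := by
    intro i
    split_ifs with hi
    · simp [T, List.getD_eq_getElem?_getD, hi]
    · exact List.getD_eq_default _ _ (by simpa [T] using hi)
  refine ⟨T, by simp [T], fun i => ?_, ?_⟩
  · rw [hT]
    split_ifs
    exacts [hsorted i, List.Pairwise.nil]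
  ext k i
  rw [toPattern, hT]
  split_ifs with hi
  · induction k with
    | zero => rw [countBelow_zero, hg.bottom, add_zero]
    | succ k ih =>
      by_cases hk : k < n
      · have hsucc : countBelow (k + 1) (row i) = countBelow k (row i) + (row i).count ⟨k, hk⟩ :=
          countBelow_succ (row i) ⟨k, hk⟩
        have hk_count : (row i).count ⟨k, hk⟩ = g (k + 1) i - g k i := hcount i ⟨k, hk⟩
        have := hg.mono k i
        omega
      · rw [countBelow_of_le _ (by omega)] at ih ⊢
        rw [hg.top (k + 1) (by omega), ← hg.top k (by omega)]
        exact ih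
  · have hmu := hg.bottom i
    rw [hg.eq_zero_of_length_le 0 (not_lt.mp hi)] at hmu
    rw [hg.eq_zero_of_length_le k (not_lt.mp hi), ← hmu]
    rfl

theorem image_toPattern (hlam : lam.Pairwise (· ≥ ·)) (hmu : mu.Pairwise (· ≥ ·))
    (hsub : ∀ i, mu.getD i 0 ≤ lam.getD i 0) (w : Fin n → ℕ) :
    toPattern mu '' {T | IsSkewSSYT n lam mu T ∧ wtT n T = w} = skewGTPatterns lam mu w := by
  ext g
  constructor
  · rintro ⟨T, ⟨hT, rfl⟩, rfl⟩
    refine ⟨isSkewGTPattern_toPattern hlam hmu hsub hT, fun k => ?_⟩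
    rw [← hT.1]
    exact wtT_add_sum_toPattern mu T k
  · rintro ⟨hg, hw⟩
    obtain ⟨T, hlen, hsort, rfl⟩ := exists_toPattern_eq hg
    refine ⟨T, ⟨isSkewSSYT_of_toPattern hlen hsort hg, funext fun k => ?_⟩, rfl⟩
    have := wtT_add_sum_toPattern mu T k
    have := hw k
    rw [hlen] at *
    omega

theorem ncard_skewSSYT_eq_ncard_skewGTPatterns (hlam : lam.Pairwise (· ≥ ·))
    (hmu : mu.Pairwise (· ≥ ·))
    (hsub : ∀ i, mu.getD i 0 ≤ lam.getD i 0) (w : Fin n → ℕ) :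
    {T | IsSkewSSYT n lam mu T ∧ wtT n T = w}.ncard = (skewGTPatterns lam mu w).ncard := by
  rw [← image_toPattern hlam hmu hsub w,
    (injOn_toPattern.mono fun _ hT => hT.1).ncard_image]

end Tableaux

end

theorem skew_kostka_symmetric (lam mu : List ℕ)
    (hlam : lam.Pairwise (· ≥ ·)) (hmu : mu.Pairwise (· ≥ ·))
    (hsub : ∀ i : ℕ, mu.getD i 0 ≤ lam.getD i 0)
    (w : Fin n → ℕ) (σ : Equiv.Perm (Fin n)) :
    {T : List (List (Fin n)) | IsSkewSSYT n lam mu T ∧ wtT n T = w}.ncard =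
    {T : List (List (Fin n)) | IsSkewSSYT n lam mu T ∧ wtT n T = w ∘ σ}.ncard := by
  rw [ncard_skewSSYT_eq_ncard_skewGTPatterns hlam hmu hsub,
    ncard_skewSSYT_eq_ncard_skewGTPatterns hlam hmu hsub]
  exact ncard_skewGTPatterns_comp_perm lam mu w σ

end KP
end

section
/- The map σ : SST_{[n]}(λ) → SST_{[n]}(λ + (1^n)), which replaces the −1st column of a rational semistandard tableau having entries −b_1,…,−b_t by a new first column with entries [n]∖{b_1,…,b_t}, is a well-defined weight-shifting bijection, i.e. it is a bijection and wt(σ(T)) = wt(T) + (ε_1 + ⋯ + ε_n) for all T. -/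
/-!
STATEMENT 3: The map `σ : SST_{[n]}(λ) → SST_{[n]}(λ + (1ⁿ))`, replacing the `−1`-st
column `{−b₁, …, −b_t}` of a rational semistandard tableau by a new first column
`[n] ∖ {b₁,…,b_t}`, is a weight-shifting bijection.

A rational semistandard tableau of rank `n` is encoded as a pair
`(negCols, posCols)`: `negCols = [C₋₁, C₋₂, …]` lists the columns of negative index,
each recorded by the strictly increasing list of `b`'s such that `−b` is an entry, and
`posCols = [C₁, C₂, …]` lists the columns of positive index.
-/

namespace KP

variable (n : ℕ)

/-- A rational tableau: (columns of negative index, columns of positive index). -/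
abbrev RatTab := List (List (Fin n)) × List (List (Fin n))

def IsColStrict (c : List (Fin n)) : Prop := c.Chain' (· < ·)

/-- Adjacent positive columns (left `c`, right `c'`): rows weakly increase. -/
def PosAdj (c c' : List (Fin n)) : Prop :=
  c'.length ≤ c.length ∧ ∀ i : ℕ, ∀ x ∈ (c)[i]?, ∀ y ∈ c'[i]?, x ≤ y

/-- Adjacent negative columns: column `−j` (stored list `v`) and `−(j+1)` (stored `u`);
the stored `b`-values weakly increase when moving to the left. -/
def NegAdj (v u : List (Fin n)) : Prop :=
  u.length ≤ v.length ∧ ∀ i : ℕ, ∀ x ∈ v[i]?, ∀ y ∈ u[i]?, x ≤ y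

/-- The complement `[n] ∖ q` as a strictly increasing list. -/
def compl (q : List (Fin n)) : List (Fin n) :=
  (List.finRange n).filter (fun i => i ∉ q)

/-- The matching condition between the `−1`-st and `1`-st columns. -/
def Matching (T : RatTab n) : Prop :=
  (T.2.headD []).length + (T.1.headD []).length ≤ n ∧
  ∀ i : ℕ, ∀ x ∈ (compl n (T.1.headD []))[i]?, ∀ y ∈ (T.2.headD [])[i]?, x ≤ y

/-- A rational semistandard tableau of rank `n`. -/
def IsRat (T : RatTab n) : Prop :=
  (∀ c ∈ T.1, IsColStrict n c ∧ c ≠ []) ∧ (∀ c ∈ T.2, IsColStrict n c ∧ c ≠ []) ∧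
  T.1.Chain' (NegAdj n) ∧ T.2.Chain' (PosAdj n) ∧ Matching n T

/-- `T` has shape `λ ∈ ℤ₊ⁿ`: the `j`-th positive column has `#{i | λ_i ≥ j}` boxes and
the `j`-th negative column has `#{i | λ_i ≤ −j}` boxes. -/
def HasShape (T : RatTab n) (lam : Fin n → ℤ) : Prop :=
  (∀ j : ℕ, (T.2.getD j []).length
      = (Finset.univ.filter (fun i : Fin n => ((j : ℤ) + 1) ≤ lam i)).card) ∧
  (∀ j : ℕ, (T.1.getD j []).length
      = (Finset.univ.filter (fun i : Fin n => lam i ≤ -((j : ℤ) + 1))).card)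

/-- The weight of a rational tableau: `wt(T) = Σ (m_i⁺ − m_i⁻) ε_i`. -/
def wtRat (T : RatTab n) : Fin n → ℤ :=
  fun i => (T.2.flatten.count i : ℤ) - (T.1.flatten.count i : ℤ)

/-- The map `σ`: the `−1`-st column is replaced by the complementary first column. -/
def sigmaMap (T : RatTab n) : RatTab n :=
  (T.1.tail,
    if (compl n (T.1.headD [])).isEmpty then T.2 else compl n (T.1.headD []) :: T.2)


/-
For strictly increasing columns `a` and `b`, the row condition `a[i] ≤ b[i]` (with `b` not
longer than `a`) holds iff `#{x ∈ b | x ≤ m} ≤ #{x ∈ a | x ≤ m}` for every `m`. Complementing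
in `[n]` turns these counts into `#{x ≤ m} - …` and hence reverses the relation. This shows at
once that `σ` keeps the negative and positive columns semistandard and satisfies the matching
condition, and that this condition is symmetric under exchanging negative and positive columns.
By that symmetry the inverse of `σ` is `σ` conjugated by the exchange. Every `i` occurs exactly
once in a column or its complement, so `σ` adds one to every weight.
-/

section ColumnLists

variable {α : Type*}

def consUnlessNil (c : List α) (L : List (List α)) : List (List α) :=
  if c.isEmpty then L else c :: L

variable {c : List α} {L : List (List α)}

lemma flatten_consUnlessNil : (consUnlessNil c L).flatten = c ++ L.flatten := by
  unfold consUnlessNil; split <;> simp_all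

lemma mem_consUnlessNil {d : List α} (h : d ∈ consUnlessNil c L) : d = c ∧ c ≠ [] ∨ d ∈ L := by
  unfold consUnlessNil at h; split at h <;> simp_all

lemma headD_consUnlessNil (h : c = [] → L = []) : (consUnlessNil c L).headD [] = c := by
  unfold consUnlessNil; split <;> simp_all

lemma tail_consUnlessNil (h : c = [] → L = []) : (consUnlessNil c L).tail = L := by
  unfold consUnlessNil; split <;> simp_all

lemma consUnlessNil_headD_tail (h : L.headD [] = [] → L = []) :
    consUnlessNil (L.headD []) L.tail = L := by
  cases L <;> simp_all [consUnlessNil]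

lemma isChain_consUnlessNil {R : List α → List α → Prop} (hc : ∀ d ∈ L.head?, R c d)
    (hL : L.IsChain R) : (consUnlessNil c L).IsChain R := by
  unfold consUnlessNil; split
  · exact hL
  · exact List.isChain_cons.mpr ⟨hc, hL⟩

lemma flatten_eq_headD_append_tail : L.flatten = L.headD [] ++ L.tail.flatten := by
  cases L <;> simp

lemma getD_zero_eq_headD : L.getD 0 [] = L.headD [] := by
  cases L <;> simp

lemma getD_succ_eq_tail_getD (j : ℕ) : L.getD (j + 1) [] = L.tail.getD j [] := by
  cases L <;> simp

lemma eq_nil_of_headD_eq_nil (hL : ∀ d ∈ L, d ≠ []) (h : L.headD [] = []) : L = [] := by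
  cases L <;> simp_all

end ColumnLists

section CountLE

variable {α : Type*} [LinearOrder α]

def countLE (l : List α) (m : α) : ℕ := l.countP (· ≤ m)

lemma lt_countLE_iff {l : List α} (hl : l.Pairwise (· < ·)) {i : ℕ} (hi : i < l.length)
    (m : α) : i < countLE l m ↔ l[i] ≤ m := by
  induction l generalizing i with
  | nil => simp at hi
  | cons a t ih =>
    obtain ⟨ha, ht⟩ := List.pairwise_cons.mp hl
    by_cases ham : a ≤ m
    · cases i with
      | zero => simp [countLE, ham]
      | succ i => simpa [countLE, List.countP_cons, ham] using ih ht (by simpa using hi)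
    · have hgt : ∀ x ∈ a :: t, m < x := by
        simp only [List.mem_cons, forall_eq_or_imp]
        exact ⟨not_le.mp ham, fun x hx => (not_le.mp ham).trans (ha x hx)⟩
      have h0 : countLE (a :: t) m = 0 :=
        List.countP_eq_zero.mpr fun x hx => by simpa using hgt x hx
      simp only [h0, Nat.not_lt_zero, false_iff, not_le]
      exact hgt _ (List.getElem_mem _)

end CountLE

section Columns

variable {n : ℕ} {q : List (Fin n)}

lemma isColStrict_iff_pairwise {c : List (Fin n)} : IsColStrict n c ↔ c.Pairwise (· < ·) :=
  List.isChain_iff_pairwise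

lemma IsColStrict.nodup {c : List (Fin n)} (hc : IsColStrict n c) : c.Nodup :=
  (isColStrict_iff_pairwise.mp hc).imp ne_of_lt

lemma mem_compl {x : Fin n} : x ∈ compl n q ↔ x ∉ q := by
  simp [compl]

lemma isColStrict_compl (q : List (Fin n)) : IsColStrict n (compl n q) :=
  isColStrict_iff_pairwise.mpr ((List.pairwise_lt_finRange n).sublist List.filter_sublist)

lemma countP_add_countP_compl (hq : q.Nodup) (p : Fin n → Bool) :
    q.countP p + (compl n q).countP p = (List.finRange n).countP p := by
  have hperm : q.Perm ((List.finRange n).filter (· ∈ q)) :=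
    (List.perm_ext_iff_of_nodup hq ((List.nodup_finRange n).filter _)).mpr (by simp)
  rw [hperm.countP_eq, List.countP_eq_countP_filter_add (List.finRange n) p (· ∈ q)]
  simp [compl]

lemma length_add_length_compl (hq : q.Nodup) : q.length + (compl n q).length = n := by
  simpa [List.countP_true] using countP_add_countP_compl hq (fun _ => true)

lemma count_add_count_compl (hq : q.Nodup) (i : Fin n) :
    q.count i + (compl n q).count i = 1 :=
  (countP_add_countP_compl hq (· == i)).trans (List.count_finRange i)

lemma compl_compl (hq : IsColStrict n q) : compl n (compl n q) = q :=
  List.Perm.eq_of_pairwise (fun _ _ _ _ h₁ h₂ => absurd (h₁.trans h₂) (lt_irrefl _))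
    (isColStrict_iff_pairwise.mp (isColStrict_compl _)) (isColStrict_iff_pairwise.mp hq)
    ((List.perm_ext_iff_of_nodup (isColStrict_compl _).nodup hq.nodup).mpr
      (by simp [mem_compl]))

lemma negAdj_iff_getElem {a b : List (Fin n)} :
    NegAdj n a b ↔ b.length ≤ a.length ∧
      ∀ i, (ha : i < a.length) → (hb : i < b.length) → a[i] ≤ b[i] := by
  simp only [NegAdj, Option.mem_def, List.getElem?_eq_some_iff]
  refine and_congr_right fun _ => ⟨fun h i ha hb => h i _ ⟨ha, rfl⟩ _ ⟨hb, rfl⟩, ?_⟩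
  rintro h i _ ⟨ha, rfl⟩ _ ⟨hb, rfl⟩
  exact h i ha hb

lemma negAdj_iff_countLE {a b : List (Fin n)} (ha : IsColStrict n a) (hb : IsColStrict n b) :
    NegAdj n a b ↔ b.length ≤ a.length ∧ ∀ m, countLE b m ≤ countLE a m := by
  rw [isColStrict_iff_pairwise] at ha hb
  rw [negAdj_iff_getElem]
  refine and_congr_right fun hlen => ⟨fun h m => ?_, fun h i hia hib => ?_⟩
  · by_contra! hlt
    have hk : countLE a m < b.length := hlt.trans_le List.countP_le_length
    have hbm := (lt_countLE_iff hb hk m).mp hlt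
    exact (lt_countLE_iff ha (hk.trans_le hlen) m).not.mp (lt_irrefl _)
      ((h _ (hk.trans_le hlen) hk).trans hbm)
  · exact (lt_countLE_iff ha hia _).mp
      (((lt_countLE_iff hb hib _).mpr le_rfl).trans_le (h _))

lemma NegAdj.compl {a b : List (Fin n)} (ha : IsColStrict n a) (hb : IsColStrict n b)
    (h : NegAdj n a b) : NegAdj n (compl n b) (compl n a) := by
  rw [negAdj_iff_countLE ha hb] at h
  rw [negAdj_iff_countLE (isColStrict_compl b) (isColStrict_compl a)]
  have hla := length_add_length_compl ha.nodup
  have hlb := length_add_length_compl hb.nodup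
  refine ⟨by omega, fun m => ?_⟩
  have hca := countP_add_countP_compl ha.nodup (· ≤ m)
  have hcb := countP_add_countP_compl hb.nodup (· ≤ m)
  have := h.2 m
  simp only [countLE] at this ⊢
  omega

end Columns

section Tableaux

variable {n : ℕ} {T : RatTab n}

lemma isColStrict_headD {L : List (List (Fin n))} (hL : ∀ c ∈ L, IsColStrict n c ∧ c ≠ []) :
    IsColStrict n (L.headD []) := by
  cases L with
  | nil => exact List.isChain_nil
  | cons c _ => exact (hL c List.mem_cons_self).1

lemma negAdj_headD {L : List (List (Fin n))} (hL : L.IsChain (NegAdj n)) :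
    NegAdj n (L.headD []) (L.tail.headD []) := by
  match L, hL with
  | [], _ | [_], _ => exact negAdj_iff_getElem.mpr ⟨by simp, fun _ _ hb => by simp at hb⟩
  | _ :: _ :: _, hL => exact (List.isChain_cons_cons.mp hL).1

lemma matching_iff (hq : (T.1.headD []).Nodup) :
    Matching n T ↔ NegAdj n (compl n (T.1.headD [])) (T.2.headD []) := by
  have := length_add_length_compl hq
  exact and_congr_left fun _ => by omega

lemma IsRat.snd_eq_nil (hT : IsRat n T) (h : compl n (T.1.headD []) = []) : T.2 = [] := by
  have hlen := length_add_length_compl (isColStrict_headD hT.1).nodup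
  have hlenMatching := hT.2.2.2.2.1
  rw [h, List.length_nil] at hlen
  exact eq_nil_of_headD_eq_nil (fun c hc => (hT.2.1 c hc).2)
    (List.eq_nil_of_length_eq_zero (by omega))

lemma isRat_swap (hT : IsRat n T) : IsRat n T.swap := by
  obtain ⟨hneg, hpos, hnchain, hpchain, hmatch⟩ := hT
  have hq := isColStrict_headD hneg
  have hp := isColStrict_headD hpos
  -- `PosAdj` and `NegAdj` are the same relation, so the chains are exchanged verbatim.
  refine ⟨hpos, hneg, hpchain, hnchain, (matching_iff hp.nodup).mpr ?_⟩
  have := ((matching_iff hq.nodup).mp hmatch).compl (isColStrict_compl _) hp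
  rwa [compl_compl hq] at this

lemma hasShape_swap {lam : Fin n → ℤ} (h : HasShape n T lam) :
    HasShape n T.swap (fun i => -lam i) := by
  refine ⟨fun j => ?_, fun j => ?_⟩
  · rw [Prod.snd_swap, h.2 j]
    congr 1; ext i; simp only [Finset.mem_filter, Finset.mem_univ, true_and]; omega
  · rw [Prod.fst_swap, h.1 j]
    congr 1; ext i; simp only [Finset.mem_filter, Finset.mem_univ, true_and]; omega

lemma sigmaMap_eq (T : RatTab n) :
    sigmaMap n T = (T.1.tail, consUnlessNil (compl n (T.1.headD [])) T.2) := rfl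

lemma isRat_sigmaMap (hT : IsRat n T) : IsRat n (sigmaMap n T) := by
  have hhead := headD_consUnlessNil hT.snd_eq_nil
  obtain ⟨hneg, hpos, hnchain, hpchain, hmatch⟩ := hT
  have hq := isColStrict_headD hneg
  have hneg' : ∀ c ∈ T.1.tail, IsColStrict n c ∧ c ≠ [] :=
    fun c hc => hneg c (List.mem_of_mem_tail hc)
  have hadj := (matching_iff hq.nodup).mp hmatch
  refine ⟨hneg', fun c hc => ?_, hnchain.tail, ?_, ?_⟩
  · rcases mem_consUnlessNil hc with ⟨rfl, hne⟩ | hc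
    · exact ⟨isColStrict_compl _, hne⟩
    · exact hpos c hc
  · refine isChain_consUnlessNil (fun d hd => ?_) hpchain
    obtain ⟨t, ht⟩ := List.head?_eq_some_iff.mp hd
    rwa [ht] at hadj
  · rw [matching_iff (isColStrict_headD hneg').nodup]
    simpa only [sigmaMap_eq, hhead] using (negAdj_headD hnchain).compl hq (isColStrict_headD hneg')

lemma hasShape_sigmaMap {lam : Fin n → ℤ} (hT : IsRat n T) (h : HasShape n T lam) :
    HasShape n (sigmaMap n T) (fun i => lam i + 1) := by
  have hc := hT.snd_eq_nil
  refine ⟨fun j => ?_, fun j => ?_⟩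
  · rw [sigmaMap_eq]
    cases j with
    | zero =>
      have hlen := length_add_length_compl (isColStrict_headD hT.1).nodup
      have hsplit := Finset.card_filter_add_card_filter_not (s := Finset.univ)
        (p := fun i : Fin n => ((0 : ℕ) : ℤ) + 1 ≤ lam i + 1)
      have hneg : (Finset.univ.filter fun i : Fin n => ¬ ((0 : ℕ) : ℤ) + 1 ≤ lam i + 1) =
          Finset.univ.filter fun i => lam i ≤ -(((0 : ℕ) : ℤ) + 1) :=
        Finset.filter_congr fun i _ => by omega
      rw [hneg, ← h.2 0, getD_zero_eq_headD, Finset.card_univ, Fintype.card_fin] at hsplit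
      rw [getD_zero_eq_headD, headD_consUnlessNil hc]
      beta_reduce
      omega
    | succ j =>
      rw [getD_succ_eq_tail_getD, tail_consUnlessNil hc, h.1 j]
      exact congrArg Finset.card (Finset.filter_congr fun i _ => by push_cast; omega)
  · rw [sigmaMap_eq, ← getD_succ_eq_tail_getD, h.2 (j + 1)]
    exact congrArg Finset.card (Finset.filter_congr fun i _ => by push_cast; omega)

lemma wtRat_sigmaMap (hT : IsRat n T) (i : Fin n) :
    wtRat n (sigmaMap n T) i = wtRat n T i + 1 := by
  have h := count_add_count_compl (isColStrict_headD hT.1).nodup i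
  simp only [wtRat, sigmaMap_eq, flatten_consUnlessNil, List.count_append]
  rw [flatten_eq_headD_append_tail (L := T.1), List.count_append]
  push_cast
  omega

lemma swap_sigmaMap_swap_sigmaMap (hT : IsRat n T) :
    (sigmaMap n (sigmaMap n T).swap).swap = T := by
  have hc := hT.snd_eq_nil
  have hne : T.1.headD [] = [] → T.1 = [] := eq_nil_of_headD_eq_nil fun c hc => (hT.1 c hc).2
  refine Prod.ext ?_ ?_
  · simp only [sigmaMap_eq, Prod.fst_swap, Prod.snd_swap, headD_consUnlessNil hc,
      compl_compl (isColStrict_headD hT.1), consUnlessNil_headD_tail hne]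
  · simp only [sigmaMap_eq, Prod.fst_swap, Prod.snd_swap, tail_consUnlessNil hc]

lemma sigmaMap_swap_sigmaMap_swap (hT : IsRat n T) : sigmaMap n (sigmaMap n T.swap).swap = T :=
  Prod.swap_inj.mp (swap_sigmaMap_swap_sigmaMap (isRat_swap hT))

end Tableaux

theorem sigma_bijective_weight_shift (lam : Fin n → ℤ) :
    Set.BijOn (sigmaMap n)
      {T : RatTab n | IsRat n T ∧ HasShape n T lam}
      {T : RatTab n | IsRat n T ∧ HasShape n T (fun i => lam i + 1)} ∧
    ∀ T : RatTab n, IsRat n T → HasShape n T lam →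
      ∀ i : Fin n, wtRat n (sigmaMap n T) i = wtRat n T i + 1 := by
  refine ⟨Set.InvOn.bijOn (f' := fun S => (sigmaMap n S.swap).swap)
      ⟨fun T hT => swap_sigmaMap_swap_sigmaMap hT.1, fun S hS => sigmaMap_swap_sigmaMap_swap hS.1⟩
      (fun T hT => ⟨isRat_sigmaMap hT.1, hasShape_sigmaMap hT.1 hT.2⟩)
      (fun S hS => ⟨isRat_swap (isRat_sigmaMap (isRat_swap hS.1)), ?_⟩),
    fun T hT _ => wtRat_sigmaMap hT⟩
  convert hasShape_swap (hasShape_sigmaMap (isRat_swap hS.1) (hasShape_swap hS.2)) using 1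
  funext i
  ring

end KP
end

section
/- The combinatorial R-matrix ς on pairs of level-one parabolically semistandard tableaux is an involution: for all (T_1,T_2) ∈ SST_{A/B}(k_1) × SST_{A/B}(k_2), applying ς twice returns (T_1,T_2). Moreover ς maps SST_{A/B}(k_1) × SST_{A/B}(k_2) bijectively onto SST_{A/B}(k_2) × SST_{A/B}(k_1), and it preserves the total weight: wt(T_1) + wt(T_2) = wt(T_2') + wt(T_1') where ς(T_1,T_2) = (T_2',T_1'). -/
/-!
STATEMENT 6: The combinatorial R-matrix `ς` on pairs of level-one parabolically
semistandard tableaux is an involution; it maps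
`SST_{A/B}(k₁) × SST_{A/B}(k₂)` bijectively onto `SST_{A/B}(k₂) × SST_{A/B}(k₁)`
and preserves the total weight (the moved entries are only redistributed).
-/

namespace KP

def tstep {γ : Type*} (x : Bool × γ) (l : List (Bool × γ)) : List (Bool × γ) :=
  match x.1, l with
  | true, (false, _) :: rest => rest
  | _, _ => x :: l

def treduce {γ : Type*} (l : List (Bool × γ)) : List (Bool × γ) := l.foldr tstep []

variable {A B : Type*} [LinearOrder A] [LinearOrder B]

def IsSuperRow {α : Type*} [LinearOrder α] (par : α → Bool) (l : List α) : Prop :=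
  l.Chain' (fun x y => x < y ∨ (x = y ∧ par x = false))

/-- A level-one parabolically semistandard tableau of shape `k`. -/
def IsLevelOne (parA : A → Bool) (parB : B → Bool) (T : List A × List B) (k : ℤ) : Prop :=
  IsSuperRow parA T.1 ∧ IsSuperRow parB T.2 ∧ (T.1.length : ℤ) - (T.2.length : ℤ) = k

/-- The tagged block of signs of a letter `a ∈ A` (multiplicities taken in `T₁`, `T₂`). -/
def tblockA (parA : A → Bool) (p₁ p₂ : List A) (a : A) : List (Bool × (A ⊕ B)) :=
  if parA a then
    List.replicate (p₁.count a) (true, Sum.inl a) ++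
      List.replicate (p₂.count a) (false, Sum.inl a)
  else
    List.replicate (p₂.count a) (false, Sum.inl a) ++
      List.replicate (p₁.count a) (true, Sum.inl a)

/-- The tagged block of signs of a letter `b ∈ B`. -/
def tblockB (parB : B → Bool) (q₁ q₂ : List B) (b : B) : List (Bool × (A ⊕ B)) :=
  if parB b then
    List.replicate (q₂.count b) (true, Sum.inr b) ++
      List.replicate (q₁.count b) (false, Sum.inr b)
  else
    List.replicate (q₁.count b) (false, Sum.inr b) ++
      List.replicate (q₂.count b) (true, Sum.inr b)

/-- The tagged sign sequence of a pair `(T₁, T₂)`: blocks of letters of `A` in decreasing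
order, followed by blocks of letters of `B` in increasing order. -/
def tsignSeq (parA : A → Bool) (parB : B → Bool) (T₁ T₂ : List A × List B) :
    List (Bool × (A ⊕ B)) :=
  ((List.insertionSort (· ≤ ·) (T₁.1 ++ T₂.1).dedup).reverse.flatMap
      (tblockA (B := B) parA T₁.1 T₂.1)) ++
  ((List.insertionSort (· ≤ ·) (T₁.2 ++ T₂.2).dedup).flatMap
      (tblockB (A := A) parB T₁.2 T₂.2))

/-- Move the entry corresponding to a `+` sign: a letter of `A` moves from `T₁⁺` to
`T₂⁺`, a letter of `B` moves from `T₂⁻` to `T₁⁻`. -/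
def movePlus (P : (List A × List B) × (List A × List B)) (y : A ⊕ B) :
    (List A × List B) × (List A × List B) :=
  match y with
  | Sum.inl a => ((P.1.1.erase a, P.1.2), (List.orderedInsert (· ≤ ·) a P.2.1, P.2.2))
  | Sum.inr b => ((P.1.1, List.orderedInsert (· ≤ ·) b P.1.2), (P.2.1, P.2.2.erase b))

/-- Move the entry corresponding to a `−` sign: a letter of `A` moves from `T₂⁺` to
`T₁⁺`, a letter of `B` moves from `T₁⁻` to `T₂⁻`. -/
def moveMinus (P : (List A × List B) × (List A × List B)) (y : A ⊕ B) :
    (List A × List B) × (List A × List B) :=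
  match y with
  | Sum.inl a => ((List.orderedInsert (· ≤ ·) a P.1.1, P.1.2), (P.2.1.erase a, P.2.2))
  | Sum.inr b => ((P.1.1, P.1.2.erase b), (P.2.1, List.orderedInsert (· ≤ ·) b P.2.2))

/-- The combinatorial R-matrix `ς`. -/
def varsigma (parA : A → Bool) (parB : B → Bool)
    (P : (List A × List B) × (List A × List B)) :
    (List A × List B) × (List A × List B) :=
  let k₁ : ℤ := (P.1.1.length : ℤ) - P.1.2.length
  let k₂ : ℤ := (P.2.1.length : ℤ) - P.2.2.length
  if k₁ = k₂ then P
  else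
    let red := treduce (tsignSeq parA parB P.1 P.2)
    if k₂ < k₁ then
      (((red.filter (fun x => x.1 = true)).take (k₁ - k₂).toNat).map Prod.snd).foldl
        movePlus P
    else
      ((((red.filter (fun x => x.1 = false)).reverse.take (k₂ - k₁).toNat).map
        Prod.snd).foldl moveMinus P)

/-!
The sign sequence of `(T₁, T₂)` reduces, by cancelling adjacent pairs `+ −`, to a word `−ᵃ +ᵇ`
with `b - a = k₁ - k₂`. The key fact is that moving the entry of the first unmatched `+` turns
that sign into a `−` and changes nothing else in the reduced word: in the block of its letter,
the first unmatched `+` is preceded by no `+` and followed by no `−`, and for a letter of parity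
`true` the row condition leaves at most one `+` in the block. So for `k₁ > k₂`, after the
`k₁ - k₂` moves of `ς` the moved signs are the last unmatched `−` of the new reduced word, and `ς`
moves them back in reverse order. The case `k₁ < k₂` is the same argument for the dual word
(reversed, signs swapped), which is the sign sequence of the swapped pair with the letters in
reverse order. The shapes are exchanged because the balance of the reduced word changes sign
while the content, hence `k₁ + k₂`, is preserved.
-/

lemma exists_of_append_append_eq_append_cons {α : Type*} {C B D u v : List α} {x : α}
    (hC : x ∉ C) (hD : x ∉ D) (h : C ++ B ++ D = u ++ x :: v) :
    ∃ p s, B = p ++ x :: s ∧ u = C ++ p ∧ v = s ++ D := by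
  rcases List.append_eq_append_iff.1 h with ⟨as, -, rfl⟩ | ⟨bs, hCB, hv⟩
  · simp at hD
  rcases bs with _ | ⟨b, bs⟩
  · rw [List.nil_append] at hv
    simp [← hv] at hD
  obtain ⟨rfl, rfl⟩ := List.cons_eq_cons.1 hv
  rcases List.append_eq_append_iff.1 hCB with ⟨as, rfl, rfl⟩ | ⟨cs, rfl, hB⟩
  · exact ⟨as, bs, rfl, rfl, rfl⟩
  rcases cs with _ | ⟨c, cs⟩
  · exact ⟨[], bs, by simpa using hB.symm, by simp, rfl⟩
  · obtain ⟨rfl, -⟩ := List.cons_eq_cons.1 hB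
    simp at hC

lemma replicate_append_replicate_eq_append_cons {α : Type*} {a b : α} (hab : a ≠ b)
    {i j : ℕ} {p s : List α} (h : List.replicate i a ++ List.replicate j b = p ++ b :: s) :
    ∃ k, p = List.replicate i a ++ List.replicate k b ∧ s = List.replicate (j - k - 1) b ∧
      k < j := by
  induction i generalizing p with
  | zero =>
    obtain ⟨hlen, hp, hs⟩ := List.replicate_eq_append_iff.1 (by simpa using h)
    simp only [List.length_cons] at hlen
    refine ⟨p.length, by simpa using hp, ?_, by omega⟩
    simp only [List.length_cons, List.replicate_succ, List.cons.injEq, true_and] at hs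
    rw [hs]
    congr 1
    omega
  | succ i ih =>
    rcases p with _ | ⟨c, p⟩
    · simp [List.replicate_succ] at h
      exact absurd h.1 hab
    · simp only [List.replicate_succ, List.cons_append, List.cons.injEq] at h
      obtain ⟨k, rfl, rfl, hk⟩ := ih h.2
      exact ⟨k, by simp [h.1, List.replicate_succ], rfl, hk⟩

lemma nodup_insertionSort_dedup {α : Type*} [LinearOrder α] (l : List α) :
    (List.insertionSort (· ≤ ·) l.dedup).Nodup :=
  (List.perm_insertionSort _ _).nodup_iff.2 (List.nodup_dedup l)

lemma insertionSort_dedup_eq_of_perm {α : Type*} [LinearOrder α] {l l' : List α}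
    (h : l.Perm l') : List.insertionSort (· ≤ ·) l.dedup = List.insertionSort (· ≤ ·) l'.dedup :=
  List.Perm.eq_of_sortedLE List.sortedLE_insertionSort List.sortedLE_insertionSort
    (((List.perm_insertionSort _ _).trans h.dedup).trans (List.perm_insertionSort _ _).symm)

lemma sum_map_count_sub_count {α : Type*} [DecidableEq α] {L l l' : List α} (hL : L.Nodup)
    (hl : ∀ a ∈ l, a ∈ L) (hl' : ∀ a ∈ l', a ∈ L) :
    (L.map fun a => (l.count a : ℤ) - l'.count a).sum = l.length - l'.length := by
  have hcount : ∀ m : List α, (∀ a ∈ m, a ∈ L) → ∑ a ∈ L.toFinset, (m.count a : ℤ) = m.length := by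
    intro m hm
    have := Multiset.sum_count_eq_card (s := L.toFinset) (m := (m : Multiset α)) (by simpa using hm)
    simp only [Multiset.coe_count, Multiset.coe_card] at this
    exact_mod_cast this
  rw [← List.sum_toFinset _ hL, Finset.sum_sub_distrib, hcount l hl, hcount l' hl']

section SignWord

variable {γ : Type*}

@[simp] lemma tstep_false (c : γ) (l : List (Bool × γ)) :
    tstep (false, c) l = (false, c) :: l := by
  rcases l with _ | ⟨⟨_ | _, _⟩, _⟩ <;> rfl

@[simp] lemma tstep_true_cons_false (c d : γ) (l : List (Bool × γ)) :
    tstep (true, c) ((false, d) :: l) = l := rfl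

lemma tstep_of_forall_true (x : Bool × γ) {l : List (Bool × γ)} (hl : ∀ z ∈ l, z.1 = true) :
    tstep x l = x :: l := by
  rcases x with ⟨_ | _, c⟩
  · exact tstep_false c l
  · rcases l with _ | ⟨⟨_ | _, _⟩, _⟩
    · rfl
    · simp at hl
    · rfl

@[simp] lemma treduce_nil : treduce ([] : List (Bool × γ)) = [] := rfl

lemma treduce_cons (x : Bool × γ) (l : List (Bool × γ)) :
    treduce (x :: l) = tstep x (treduce l) := rfl

lemma treduce_singleton (x : Bool × γ) : treduce [x] = [x] :=
  tstep_of_forall_true x (by simp)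

lemma foldr_tstep_of_forall_false {M : List (Bool × γ)} (hM : ∀ z ∈ M, z.1 = false)
    (s : List (Bool × γ)) : M.foldr tstep s = M ++ s := by
  induction M with
  | nil => rfl
  | cons x M ih =>
    obtain ⟨hx, hM'⟩ := List.forall_mem_cons.1 hM
    rcases x with ⟨_, c⟩
    simp only at hx
    simp [hx, ih hM']

lemma foldr_tstep_of_forall_true {T s : List (Bool × γ)} (hT : ∀ z ∈ T, z.1 = true)
    (hs : ∀ z ∈ s, z.1 = true) : T.foldr tstep s = T ++ s := by
  induction T with
  | nil => rfl
  | cons x T ih =>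
    obtain ⟨-, hT'⟩ := List.forall_mem_cons.1 hT
    rw [List.foldr_cons, ih hT', tstep_of_forall_true x, List.cons_append]
    intro z hz
    rcases List.mem_append.1 hz with h | h
    exacts [hT' z h, hs z h]

lemma foldr_tstep_tstep (x : Bool × γ) (r s : List (Bool × γ)) :
    (tstep x r).foldr tstep s = tstep x (r.foldr tstep s) := by
  rcases x with ⟨_ | _, c⟩
  · simp
  · rcases r with _ | ⟨⟨_ | _, d⟩, r⟩
    · rfl
    · simp
    · rfl

lemma foldr_tstep_treduce (l s : List (Bool × γ)) :
    (treduce l).foldr tstep s = l.foldr tstep s := by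
  induction l with
  | nil => rfl
  | cons x l ih => rw [treduce_cons, foldr_tstep_tstep, ih, List.foldr_cons]

lemma treduce_append (l l' : List (Bool × γ)) :
    treduce (l ++ l') = (treduce l).foldr tstep (treduce l') := by
  rw [foldr_tstep_treduce, treduce, treduce, List.foldr_append]

lemma exists_treduce_eq_append (l : List (Bool × γ)) :
    ∃ M T, treduce l = M ++ T ∧ (∀ z ∈ M, z.1 = false) ∧ ∀ z ∈ T, z.1 = true := by
  induction l with
  | nil => exact ⟨[], [], rfl, by simp, by simp⟩
  | cons x l ih =>
    obtain ⟨M, T, hl, hM, hT⟩ := ih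
    rw [treduce_cons, hl]
    rcases x with ⟨_ | _, c⟩
    · exact ⟨(false, c) :: M, T, by simp, by simpa using hM, hT⟩
    · rcases M with _ | ⟨⟨_ | _, d⟩, M⟩
      · exact ⟨[], (true, c) :: T, tstep_of_forall_true _ hT, by simp, by simpa using hT⟩
      · exact ⟨M, T, rfl, fun z hz => hM z (List.mem_cons_of_mem _ hz), hT⟩
      · simp at hM

lemma treduce_append_cons {u v : List (Bool × γ)} (x : Bool × γ)
    (hu : ∀ z ∈ treduce u, z.1 = false) (hv : ∀ z ∈ treduce v, z.1 = true) :
    treduce (u ++ x :: v) = treduce u ++ x :: treduce v := by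
  rw [treduce_append, treduce_cons, tstep_of_forall_true x hv, foldr_tstep_of_forall_false hu]

lemma exists_eq_append_cons_of_treduce {w M T : List (Bool × γ)} {x : Bool × γ}
    (hM : ∀ z ∈ M, z.1 = false) (hT : ∀ z ∈ T, z.1 = true) (h : treduce w = M ++ x :: T) :
    ∃ u v, w = u ++ x :: v ∧ treduce u = M ∧ treduce v = T := by
  induction w generalizing M with
  | nil => simp at h
  | cons y w ih =>
    rw [treduce_cons] at h
    rcases y with ⟨_ | _, c⟩
    · rw [tstep_false] at h
      rcases M with _ | ⟨m, M⟩
      · obtain ⟨rfl, rfl⟩ := List.cons_eq_cons.1 h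
        exact ⟨[], w, rfl, rfl, rfl⟩
      · rw [List.cons_append] at h
        obtain ⟨rfl, hw⟩ := List.cons_eq_cons.1 h
        obtain ⟨u, v, rfl, hu, hv⟩ := ih (fun z hz => hM z (List.mem_cons_of_mem _ hz)) hw
        exact ⟨(false, c) :: u, v, rfl, by simp [treduce_cons, hu], hv⟩
    · obtain ⟨M', T', hw, hM', hT'⟩ := exists_treduce_eq_append w
      rw [hw] at h
      rcases M' with _ | ⟨⟨_ | _, d⟩, M'⟩
      · rw [List.nil_append, tstep_of_forall_true _ hT'] at h
        rcases M with _ | ⟨m, M⟩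
        · obtain ⟨rfl, rfl⟩ := List.cons_eq_cons.1 h
          exact ⟨[], w, rfl, rfl, by rw [hw, List.nil_append]⟩
        · obtain ⟨rfl, -⟩ := List.cons_eq_cons.1 h
          simp at hM
      · rw [List.cons_append, tstep_true_cons_false] at h
        obtain ⟨u, v, rfl, hu, hv⟩ := ih (M := (false, d) :: M) (by simpa using hM)
          (by rw [hw, List.cons_append, h]; rfl)
        exact ⟨(true, c) :: u, v, rfl, by rw [treduce_cons, hu]; rfl, hv⟩
      · simp at hM'

lemma filter_append_of_forall {M T : List (Bool × γ)} (hM : ∀ z ∈ M, z.1 = false)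
    (hT : ∀ z ∈ T, z.1 = true) : (M ++ T).filter (fun x => x.1 = true) = T := by
  rw [List.filter_append, List.filter_eq_nil_iff.2 (by simp_all),
    List.filter_eq_self.2 (by simp_all), List.nil_append]

def dualWord (l : List (Bool × γ)) : List (Bool × γ) := (l.map (Prod.map not id)).reverse

@[simp] lemma dualWord_nil : dualWord ([] : List (Bool × γ)) = [] := rfl

@[simp] lemma dualWord_cons (x : Bool × γ) (l : List (Bool × γ)) :
    dualWord (x :: l) = dualWord l ++ [(!x.1, x.2)] := by
  simp [dualWord, Prod.map]

@[simp] lemma dualWord_append (l l' : List (Bool × γ)) :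
    dualWord (l ++ l') = dualWord l' ++ dualWord l := by
  simp [dualWord]

@[simp] lemma mem_dualWord {x : Bool × γ} {l : List (Bool × γ)} :
    x ∈ dualWord l ↔ (!x.1, x.2) ∈ l := by
  rcases x with ⟨b, c⟩
  simp [dualWord, Prod.map, Bool.not_eq_eq_eq_not]

@[simp] lemma dualWord_dualWord (l : List (Bool × γ)) : dualWord (dualWord l) = l := by
  induction l with
  | nil => rfl
  | cons x l ih => simp [ih]

lemma treduce_dualWord (l : List (Bool × γ)) : treduce (dualWord l) = dualWord (treduce l) := by
  induction l with
  | nil => rfl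
  | cons x l ih =>
    obtain ⟨M, T, hl, hM, hT⟩ := exists_treduce_eq_append l
    have hdT : ∀ z ∈ dualWord T, z.1 = false := fun z hz => by
      simpa using hT _ (mem_dualWord.1 hz)
    have hdM : ∀ z ∈ dualWord M, z.1 = true := fun z hz => by
      simpa using hM _ (mem_dualWord.1 hz)
    rw [dualWord_cons, treduce_append, ih, treduce_singleton, treduce_cons x l, hl,
      dualWord_append, List.foldr_append, foldr_tstep_of_forall_false hdT]
    rcases x with ⟨_ | _, c⟩
    · rw [foldr_tstep_of_forall_true hdM (by simp)]
      simp
    · rcases M with _ | ⟨⟨_ | _, d⟩, M⟩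
      · rw [List.nil_append, tstep_of_forall_true _ hT]
        simp
      · have hdM' : ∀ z ∈ dualWord M, z.1 = true := fun z hz => hdM z (by simp_all)
        simp [foldr_tstep_of_forall_true hdM' (s := []) (by simp)]
      · simp at hM

lemma ne_false_cons_of_treduce {v : List (Bool × γ)} (hv : ∀ z ∈ treduce v, z.1 = true)
    (c : γ) (s : List (Bool × γ)) : v ≠ (false, c) :: s := by
  rintro rfl
  simp [treduce_cons] at hv

lemma ne_append_true_of_treduce {u : List (Bool × γ)} (hu : ∀ z ∈ treduce u, z.1 = false)
    (c : γ) (p : List (Bool × γ)) : u ≠ p ++ [(true, c)] := by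
  rintro rfl
  refine ne_false_cons_of_treduce (v := dualWord (p ++ [(true, c)])) ?_ c (dualWord p) (by simp)
  intro z hz
  rw [treduce_dualWord, mem_dualWord] at hz
  simpa using hu _ hz

def balance (l : List (Bool × γ)) : ℤ := (l.map fun x => if x.1 = true then 1 else -1).sum

@[simp] lemma balance_nil : balance ([] : List (Bool × γ)) = 0 := rfl

@[simp] lemma balance_cons (x : Bool × γ) (l : List (Bool × γ)) :
    balance (x :: l) = (if x.1 = true then 1 else -1) + balance l := by
  simp [balance]

@[simp] lemma balance_append (l l' : List (Bool × γ)) :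
    balance (l ++ l') = balance l + balance l' := by
  simp [balance]

lemma balance_of_forall_false {M : List (Bool × γ)} (hM : ∀ z ∈ M, z.1 = false) :
    balance M = -M.length := by
  induction M with
  | nil => rfl
  | cons x M ih =>
    rw [List.forall_mem_cons] at hM
    simp [hM.1, ih hM.2]

lemma balance_of_forall_true {T : List (Bool × γ)} (hT : ∀ z ∈ T, z.1 = true) :
    balance T = T.length := by
  induction T with
  | nil => rfl
  | cons x T ih =>
    rw [List.forall_mem_cons] at hT
    simp [hT.1, ih hT.2]
    ring

lemma balance_treduce (l : List (Bool × γ)) : balance (treduce l) = balance l := by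
  induction l with
  | nil => rfl
  | cons x l ih =>
    rw [treduce_cons, balance_cons, ← ih]
    rcases x with ⟨_ | _, c⟩
    · simp
    · rcases treduce l with _ | ⟨⟨_ | _, d⟩, r⟩
      · rfl
      · simp
      · rfl

lemma balance_dualWord (l : List (Bool × γ)) : balance (dualWord l) = -balance l := by
  induction l with
  | nil => rfl
  | cons x l ih => rcases x with ⟨_ | _, c⟩ <;> simp [ih]

/-- `tblockA` and `tblockB` are blocks of this form, `e` being the parity of the letter. -/
def signBlock (e : Bool) (m n : ℕ) (c : γ) : List (Bool × γ) :=
  if e then List.replicate m (true, c) ++ List.replicate n (false, c)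
  else List.replicate n (false, c) ++ List.replicate m (true, c)

lemma snd_eq_of_mem_signBlock {e : Bool} {m n : ℕ} {c : γ} {x : Bool × γ}
    (hx : x ∈ signBlock e m n c) : x.2 = c := by
  unfold signBlock at hx
  split at hx <;> rcases List.mem_append.1 hx with h | h <;> rw [List.eq_of_mem_replicate h]

/-- `hp` and `hs` say that the marked `+` is neither preceded by a `+` nor followed by a `−`,
as holds for the first unmatched `+` of a word. -/
lemma signBlock_flip {e : Bool} {m n : ℕ} {c : γ} {p s : List (Bool × γ)}
    (he : e = true → m ≤ 1) (hp : ∀ d p₀, p ≠ p₀ ++ [(true, d)])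
    (hs : ∀ d s₀, s ≠ (false, d) :: s₀) (h : signBlock e m n c = p ++ (true, c) :: s) :
    0 < m ∧ (e = true → n = 0) ∧ p ++ (false, c) :: s = signBlock e (m - 1) (n + 1) c := by
  cases e
  · simp only [signBlock, Bool.false_eq_true, if_false] at h ⊢
    obtain ⟨k, rfl, rfl, hk⟩ := replicate_append_replicate_eq_append_cons (by simp) h
    obtain rfl : k = 0 := by
      rcases k with _ | k
      · rfl
      · exact absurd (by simp [List.replicate_succ'])
          (hp c (List.replicate n (false, c) ++ List.replicate k (true, c)))
    refine ⟨hk, by simp, ?_⟩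
    simp [List.replicate_succ']
  · simp only [signBlock, if_true] at h ⊢
    have hc : (true, c) ∉ List.replicate n (false, c) := by simp
    obtain rfl : m = 1 := by
      rcases Nat.le_one_iff_eq_zero_or_eq_one.1 (he rfl) with rfl | rfl
      · rw [List.replicate_zero, List.nil_append] at h
        simp [h] at hc
      · rfl
    rcases List.cons_eq_append_iff.1 (by simpa using h) with ⟨rfl, hs'⟩ | ⟨p', -, hn⟩
    · obtain rfl := (List.cons_eq_cons.1 hs').2
      obtain rfl : n = 0 := by
        rcases n with _ | n
        · rfl
        · exact absurd rfl (hs c (List.replicate n (false, c)))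
      simp
    · simp [hn] at hc

def blockWord (L : List γ) (e : γ → Bool) (m n : γ → ℕ) : List (Bool × γ) :=
  L.flatMap fun c => signBlock (e c) (m c) (n c) c

lemma blockWord_append_cons (L₁ L₂ : List γ) (c : γ) (e : γ → Bool) (m n : γ → ℕ) :
    blockWord (L₁ ++ c :: L₂) e m n =
      blockWord L₁ e m n ++ signBlock (e c) (m c) (n c) c ++ blockWord L₂ e m n := by
  simp [blockWord, List.append_assoc]

lemma snd_ne_of_mem_blockWord {L : List γ} {e : γ → Bool} {m n : γ → ℕ} {c : γ} (hc : c ∉ L)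
    {x : Bool × γ} (hx : x ∈ blockWord L e m n) : x.2 ≠ c := by
  obtain ⟨d, hd, hx⟩ := List.mem_flatMap.1 hx
  rw [snd_eq_of_mem_signBlock hx]
  exact ne_of_mem_of_not_mem hd hc

lemma blockWord_update_of_not_mem [DecidableEq γ] {L : List γ} {c : γ} (hc : c ∉ L)
    (e : γ → Bool) (m n : γ → ℕ) (i j : ℕ) :
    blockWord L e (Function.update m c i) (Function.update n c j) = blockWord L e m n :=
  List.flatMap_congr fun d hd => by
    rw [Function.update_of_ne (ne_of_mem_of_not_mem hd hc),
      Function.update_of_ne (ne_of_mem_of_not_mem hd hc)]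

lemma treduce_blockWord_flip [DecidableEq γ] {L : List γ} (hL : L.Nodup) {e : γ → Bool}
    {m n : γ → ℕ} {c : γ} {M T : List (Bool × γ)} (he : e c = true → m c ≤ 1)
    (hM : ∀ z ∈ M, z.1 = false) (hT : ∀ z ∈ T, z.1 = true)
    (h : treduce (blockWord L e m n) = M ++ (true, c) :: T) :
    0 < m c ∧ (e c = true → n c = 0) ∧
      treduce (blockWord L e (Function.update m c (m c - 1)) (Function.update n c (n c + 1))) =
        M ++ (false, c) :: T := by
  obtain ⟨u, v, hw, hu, hv⟩ := exists_eq_append_cons_of_treduce hM hT h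
  have hc : c ∈ L := by
    obtain ⟨d, hd, hx⟩ := List.mem_flatMap.1 (hw ▸ List.mem_append_right u List.mem_cons_self :
      (true, c) ∈ blockWord L e m n)
    rwa [← snd_eq_of_mem_signBlock hx] at hd
  obtain ⟨L₁, L₂, rfl⟩ := List.append_of_mem hc
  obtain ⟨hc₁, hc₂⟩ : c ∉ L₁ ∧ c ∉ L₂ := by
    simpa using (List.nodup_cons.1 (List.nodup_middle.1 hL)).1
  rw [blockWord_append_cons] at hw ⊢
  obtain ⟨p, s, hB, rfl, rfl⟩ := exists_of_append_append_eq_append_cons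
    (fun h => snd_ne_of_mem_blockWord hc₁ h rfl) (fun h => snd_ne_of_mem_blockWord hc₂ h rfl) hw
  obtain ⟨hm, hn, hB'⟩ := signBlock_flip he
    (fun d p₀ hp => ne_append_true_of_treduce (hu ▸ hM) d _ (by rw [hp, List.append_assoc]))
    (fun d s₀ hs => ne_false_cons_of_treduce (hv ▸ hT) d _ (by rw [hs, List.cons_append])) hB
  refine ⟨hm, hn, ?_⟩
  rw [Function.update_self, Function.update_self, blockWord_update_of_not_mem hc₁,
    blockWord_update_of_not_mem hc₂, ← hB', List.append_assoc, List.append_assoc,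
    List.cons_append, ← List.append_assoc, treduce_append_cons _ (hu ▸ hM) (hv ▸ hT), hu, hv]

lemma dualWord_blockWord (L : List γ) (e : γ → Bool) (m n : γ → ℕ) :
    dualWord (blockWord L e m n) = blockWord L.reverse e n m := by
  induction L with
  | nil => rfl
  | cons c L ih =>
    have hB : dualWord (signBlock (e c) (m c) (n c) c) = signBlock (e c) (n c) (m c) c := by
      unfold signBlock
      split <;> simp [dualWord]
    simp only [blockWord, List.flatMap_cons, dualWord_append, List.reverse_cons,
      List.flatMap_append, List.flatMap_nil, List.append_nil] at ih ⊢
    rw [ih, hB]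

lemma balance_blockWord (L : List γ) (e : γ → Bool) (m n : γ → ℕ) :
    balance (blockWord L e m n) = (L.map fun c => (m c : ℤ) - n c).sum := by
  induction L with
  | nil => rfl
  | cons c L ih =>
    have hB : balance (signBlock (e c) (m c) (n c) c) = (m c : ℤ) - n c := by
      unfold signBlock
      split <;> simp [balance, List.sum_replicate] <;> ring
    simp only [blockWord, List.flatMap_cons, balance_append, List.map_cons, List.sum_cons] at ih ⊢
    rw [hB, ih]

lemma map_snd_take_filter_dualWord (l : List (Bool × γ)) (d : ℕ) :
    (((dualWord l).filter (fun x => x.1 = true)).take d).map Prod.snd =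
      ((l.filter (fun x => x.1 = false)).reverse.take d).map Prod.snd := by
  simp [dualWord, List.filter_reverse, List.filter_map, ← List.map_reverse, ← List.map_take,
    Function.comp_def]

end SignWord

section FlipRun

variable {S γ : Type*}

/-- One move of `ς`, abstracted so that the moves of `−` signs can be treated as moves of `+`
signs of the dual word. -/
def FlipStep (Inv : S → Prop) (w : S → List (Bool × γ)) (f g : S → γ → S) : Prop :=
  ∀ P M y T, Inv P → (∀ z ∈ M, z.1 = false) → (∀ z ∈ T, z.1 = true) →
    treduce (w P) = M ++ (true, y) :: T →
      Inv (f P y) ∧ treduce (w (f P y)) = M ++ (false, y) :: T ∧ g (f P y) y = P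

def flipRun (w : S → List (Bool × γ)) (f : S → γ → S) (d : ℕ) (P : S) : S :=
  ((((treduce (w P)).filter (fun x => x.1 = true)).take d).map Prod.snd).foldl f P

variable {Inv : S → Prop} {w : S → List (Bool × γ)} {f g : S → γ → S}

lemma FlipStep.foldl_spec (hstep : FlipStep Inv w f g) (U : List (Bool × γ))
    (hU : ∀ z ∈ U, z.1 = true) {P : S} (hP : Inv P) {M T : List (Bool × γ)}
    (hM : ∀ z ∈ M, z.1 = false) (hT : ∀ z ∈ T, z.1 = true) (h : treduce (w P) = M ++ U ++ T) :
    Inv ((U.map Prod.snd).foldl f P) ∧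
      treduce (w ((U.map Prod.snd).foldl f P)) = M ++ U.map (Prod.map not id) ++ T ∧
      (U.map Prod.snd).reverse.foldl g ((U.map Prod.snd).foldl f P) = P := by
  induction U generalizing P M with
  | nil => exact ⟨hP, by simpa using h, rfl⟩
  | cons x U ih =>
    rw [List.forall_mem_cons] at hU
    rcases x with ⟨b, y⟩
    obtain rfl : b = true := hU.1
    obtain ⟨hP', h', hgf⟩ := hstep P M y (U ++ T) hP hM
      (fun z hz => (List.mem_append.1 hz).elim (hU.2 z) (hT z)) (by simpa using h)
    obtain ⟨hinv, hred, hundo⟩ := ih hU.2 hP' (M := M ++ [(false, y)]) (by simpa using hM)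
      (by simpa using h')
    refine ⟨hinv, by simpa using hred, ?_⟩
    simp [hundo, hgf]

lemma FlipStep.flipRun_spec (hstep : FlipStep Inv w f g) {w' : S → List (Bool × γ)}
    (hw' : ∀ P, treduce (w' P) = dualWord (treduce (w P))) {P : S} (hP : Inv P) {d : ℕ}
    (hd : (d : ℤ) = balance (w P)) :
    Inv (flipRun w f d P) ∧ balance (w (flipRun w f d P)) = -d ∧
      flipRun w' g d (flipRun w f d P) = P := by
  obtain ⟨M, T, hred, hM, hT⟩ := exists_treduce_eq_append (w P)
  rw [← balance_treduce, hred, balance_append, balance_of_forall_false hM,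
    balance_of_forall_true hT] at hd
  set U := T.take d with hUdef
  have hU : ∀ z ∈ U, z.1 = true := fun z hz => hT z (List.mem_of_mem_take hz)
  have hUlen : U.length = d := by simp [hUdef]; omega
  have hTd : ∀ z ∈ T.drop d, z.1 = true := fun z hz => hT z (List.mem_of_mem_drop hz)
  have hrun : flipRun w f d P = (U.map Prod.snd).foldl f P := by
    rw [flipRun, hred, filter_append_of_forall hM hT]
  obtain ⟨hinv, hred', hundo⟩ := hstep.foldl_spec U hU hP hM hTd
    (by rw [hred, List.append_assoc, List.take_append_drop])
  have hflip : ∀ z ∈ U.map (Prod.map not id), z.1 = false := by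
    simp only [List.mem_map]
    rintro _ ⟨z, hz, rfl⟩
    simp [hU z hz]
  rw [← hrun] at hinv hred' hundo
  refine ⟨hinv, ?_, ?_⟩
  · rw [← balance_treduce, hred', balance_append, balance_append, balance_of_forall_false hM,
      balance_of_forall_false hflip, balance_of_forall_true hTd]
    simp only [List.length_map, hUlen, List.length_drop]
    omega
  · have hdualU : dualWord (U.map (Prod.map not id)) = U.reverse := by
      simp [dualWord, Function.comp_def, Prod.map]
    have hdT : ∀ z ∈ dualWord (T.drop d), z.1 = false := fun z hz => by
      simpa using hTd _ (mem_dualWord.1 hz)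
    have hdM : ∀ z ∈ dualWord M, z.1 = true := fun z hz => by
      simpa using hM _ (mem_dualWord.1 hz)
    rw [KP.flipRun, hw', hred', dualWord_append, dualWord_append,
      filter_append_of_forall hdT (fun z hz => (List.mem_append.1 hz).elim
        (fun h => hU z (List.mem_reverse.1 (hdualU ▸ h))) (hdM z)), hdualU,
      List.take_left' (by simpa using hUlen), List.map_reverse, hundo]

end FlipRun

section SuperRow

variable {α : Type*} [LinearOrder α] {par : α → Bool} {l : List α}

lemma isSuperRow_iff :
    IsSuperRow par l ↔ l.Pairwise (· ≤ ·) ∧ ∀ a, par a = true → l.count a ≤ 1 := by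
  have : IsTrans α fun x y => x < y ∨ (x = y ∧ par x = false) :=
    ⟨by
      rintro x y z (h | ⟨rfl, h⟩) (h' | ⟨rfl, h'⟩)
      exacts [Or.inl (h.trans h'), Or.inl h, Or.inl h', Or.inr ⟨rfl, h⟩]⟩
  rw [IsSuperRow, List.Chain', List.isChain_iff_pairwise, List.pairwise_iff_forall_sublist,
    List.pairwise_iff_forall_sublist]
  constructor
  · intro h
    refine ⟨fun hab => (h hab).elim le_of_lt (fun h => h.1.le), fun a ha => ?_⟩
    by_contra hlt
    have := h (List.replicate_sublist_iff.2 (by omega : 2 ≤ l.count a))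
    simp_all
  · rintro ⟨hle, hcount⟩ a b hab
    rcases (hle hab).lt_or_eq with hlt | rfl
    · exact Or.inl hlt
    · refine Or.inr ⟨rfl, ?_⟩
      by_contra hpar
      have := hcount a (by simpa using hpar)
      have := List.replicate_sublist_iff.1 (by simpa using hab : (List.replicate 2 a).Sublist l)
      omega

lemma IsSuperRow.erase (h : IsSuperRow par l) (a : α) : IsSuperRow par (l.erase a) := by
  rw [isSuperRow_iff] at h ⊢
  exact ⟨h.1.sublist List.erase_sublist, fun b hb =>
    (List.erase_sublist.count_le _).trans (h.2 b hb)⟩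

lemma IsSuperRow.orderedInsert (h : IsSuperRow par l) {a : α} (ha : par a = true → a ∉ l) :
    IsSuperRow par (l.orderedInsert (· ≤ ·) a) := by
  rw [isSuperRow_iff] at h ⊢
  refine ⟨h.1.orderedInsert a l, fun b hb => ?_⟩
  rw [List.orderedInsert_count]
  split_ifs with hab
  · subst hab
    simp [List.count_eq_zero.2 (ha hb)]
  · simpa using h.2 b hb

end SuperRow

def shape {α β : Type*} (T : List α × List β) : ℤ := T.1.length - T.2.length

/-- The total weight `wt(T₁) + wt(T₂)`, as multisets of letters. -/
def content {α β : Type*} (P : (List α × List β) × (List α × List β)) : Multiset α × Multiset β :=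
  ((P.1.1 ++ P.2.1 : List α), (P.1.2 ++ P.2.2 : List β))

lemma content_swap {α β : Type*} (P : (List α × List β) × (List α × List β)) :
    content P.swap = content P := by
  simp [content, List.perm_append_comm]

lemma shape_add_shape_eq_of_content_eq {α β : Type*}
    {P Q : (List α × List β) × (List α × List β)} (h : content Q = content P) :
    shape Q.1 + shape Q.2 = shape P.1 + shape P.2 := by
  have h₁ := congrArg (fun c => Multiset.card c.1) h
  have h₂ := congrArg (fun c => Multiset.card c.2) h
  simp only [content, Multiset.coe_card, List.length_append] at h₁ h₂
  simp only [shape]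
  omega

section Tableaux

variable {parA : A → Bool} {parB : B → Bool}

def IsSuperRowPair (parA : A → Bool) (parB : B → Bool)
    (P : (List A × List B) × (List A × List B)) : Prop :=
  IsSuperRow parA P.1.1 ∧ IsSuperRow parB P.1.2 ∧ IsSuperRow parA P.2.1 ∧ IsSuperRow parB P.2.2

/-- The number of `+` signs of each letter in the sign sequence of `P`; the `−` signs are counted
by `plusCount P.swap`. -/
def plusCount (P : (List A × List B) × (List A × List B)) : A ⊕ B → ℕ :=
  Sum.elim (fun a => P.1.1.count a) (fun b => P.2.2.count b)

def signLetters (P : (List A × List B) × (List A × List B)) : List (A ⊕ B) :=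
  (List.insertionSort (· ≤ ·) (P.1.1 ++ P.2.1).dedup).reverse.map Sum.inl ++
    (List.insertionSort (· ≤ ·) (P.1.2 ++ P.2.2).dedup).map Sum.inr

def signWord (parA : A → Bool) (parB : B → Bool) (L : List (A ⊕ B))
    (P : (List A × List B) × (List A × List B)) : List (Bool × (A ⊕ B)) :=
  blockWord L (Sum.elim parA parB) (plusCount P) (plusCount P.swap)

lemma tsignSeq_eq_signWord (P : (List A × List B) × (List A × List B)) :
    tsignSeq parA parB P.1 P.2 = signWord parA parB (signLetters P) P := by
  rw [tsignSeq, signWord, blockWord, signLetters, List.flatMap_append, List.flatMap_map,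
    List.flatMap_map]
  rfl

lemma signLetters_nodup (P : (List A × List B) × (List A × List B)) : (signLetters P).Nodup :=
  List.nodup_append.2 ⟨(List.nodup_reverse.2 (nodup_insertionSort_dedup _)).map Sum.inl_injective,
    (nodup_insertionSort_dedup _).map Sum.inr_injective, by simp⟩

lemma signLetters_eq_of_content_eq {P Q : (List A × List B) × (List A × List B)}
    (h : content P = content Q) : signLetters P = signLetters Q := by
  simp only [content, Prod.ext_iff, Multiset.coe_eq_coe] at h
  rw [signLetters, signLetters, insertionSort_dedup_eq_of_perm h.1,
    insertionSort_dedup_eq_of_perm h.2]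

lemma balance_tsignSeq (P : (List A × List B) × (List A × List B)) :
    balance (tsignSeq parA parB P.1 P.2) = shape P.1 - shape P.2 := by
  have hA := sum_map_count_sub_count (l := P.1.1) (l' := P.2.1)
    (List.nodup_reverse.2 (nodup_insertionSort_dedup (P.1.1 ++ P.2.1)))
    (fun a ha => by simp [ha]) (fun a ha => by simp [ha])
  have hB := sum_map_count_sub_count (l := P.2.2) (l' := P.1.2)
    (nodup_insertionSort_dedup (P.1.2 ++ P.2.2)) (fun a ha => by simp [ha])
    (fun a ha => by simp [ha])
  rw [tsignSeq_eq_signWord, signWord, balance_blockWord, signLetters, List.map_append,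
    List.sum_append, List.map_map, List.map_map]
  simp only [Function.comp_def, plusCount, Sum.elim_inl, Sum.elim_inr, Prod.fst_swap,
    Prod.snd_swap] at hA hB ⊢
  rw [hA, hB, shape, shape]
  ring

lemma isSuperRowPair_swap {P : (List A × List B) × (List A × List B)} :
    IsSuperRowPair parA parB P.swap ↔ IsSuperRowPair parA parB P := by
  simp only [IsSuperRowPair, Prod.fst_swap, Prod.snd_swap]
  tauto

lemma moveMinus_eq_swap_movePlus_swap (P : (List A × List B) × (List A × List B)) (y : A ⊕ B) :
    moveMinus P y = (movePlus P.swap y).swap := by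
  cases y <;> rfl

lemma plusCount_movePlus (P : (List A × List B) × (List A × List B)) (y : A ⊕ B) :
    plusCount (movePlus P y) = Function.update (plusCount P) y (plusCount P y - 1) := by
  funext z
  rcases y with a | b <;> rcases z with a' | b' <;>
    simp only [plusCount, movePlus, Function.update_apply, List.count_erase, Sum.elim_inl,
      Sum.elim_inr, Sum.inl.injEq, Sum.inr.injEq, reduceCtorEq] <;> split_ifs <;> simp_all

lemma plusCount_swap_movePlus (P : (List A × List B) × (List A × List B)) (y : A ⊕ B) :
    plusCount (movePlus P y).swap =
      Function.update (plusCount P.swap) y (plusCount P.swap y + 1) := by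
  funext z
  rcases y with a | b <;> rcases z with a' | b' <;>
    simp only [plusCount, movePlus, Prod.swap, Function.update_apply, List.orderedInsert_count,
      Sum.elim_inl, Sum.elim_inr, Sum.inl.injEq, Sum.inr.injEq, reduceCtorEq] <;>
    split_ifs <;> simp_all

lemma content_movePlus {P : (List A × List B) × (List A × List B)} {y : A ⊕ B}
    (hy : 0 < plusCount P y) : content (movePlus P y) = content P := by
  rcases y with a | b <;>
    simp only [content, movePlus, Prod.mk.injEq, Multiset.coe_eq_coe, and_true, true_and]
  · calc (P.1.1.erase a ++ P.2.1.orderedInsert (· ≤ ·) a).Perm (P.1.1.erase a ++ a :: P.2.1) :=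
          (List.perm_orderedInsert _ _ _).append_left _
      List.Perm _ (a :: P.1.1.erase a ++ P.2.1) := List.perm_middle
      List.Perm _ (P.1.1 ++ P.2.1) :=
          (List.perm_cons_erase (List.count_pos_iff.1 hy)).symm.append_right _
  · calc (P.1.2.orderedInsert (· ≤ ·) b ++ P.2.2.erase b).Perm (b :: P.1.2 ++ P.2.2.erase b) :=
          (List.perm_orderedInsert _ _ _).append_right _
      List.Perm _ (P.1.2 ++ b :: P.2.2.erase b) := List.perm_middle.symm
      List.Perm _ (P.1.2 ++ P.2.2) :=
          (List.perm_cons_erase (List.count_pos_iff.1 hy)).symm.append_left _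

lemma IsSuperRowPair.movePlus {P : (List A × List B) × (List A × List B)}
    (hP : IsSuperRowPair parA parB P) {y : A ⊕ B}
    (hy : Sum.elim parA parB y = true → plusCount P.swap y = 0) :
    IsSuperRowPair parA parB (movePlus P y) := by
  obtain ⟨h₁, h₂, h₃, h₄⟩ := hP
  rcases y with a | b
  · exact ⟨h₁.erase a, h₂, h₃.orderedInsert fun h => List.count_eq_zero.1 (hy h), h₄⟩
  · exact ⟨h₁, h₂.orderedInsert fun h => List.count_eq_zero.1 (hy h), h₃, h₄.erase b⟩

lemma IsSuperRowPair.plusCount_le_one {P : (List A × List B) × (List A × List B)}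
    (hP : IsSuperRowPair parA parB P) {y : A ⊕ B} (hy : Sum.elim parA parB y = true) :
    plusCount P y ≤ 1 := by
  rcases y with a | b
  · exact (isSuperRow_iff.1 hP.1).2 a hy
  · exact (isSuperRow_iff.1 hP.2.2.2).2 b hy

lemma moveMinus_movePlus {P : (List A × List B) × (List A × List B)}
    (hP : IsSuperRowPair parA parB P) {y : A ⊕ B} (hy : 0 < plusCount P y) :
    moveMinus (movePlus P y) y = P := by
  rcases y with a | b
  · simp [movePlus, moveMinus, List.orderedInsert_erase _ _ (List.count_pos_iff.1 hy)
      (isSuperRow_iff.1 hP.1).1, List.erase_orderedInsert]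
  · simp [movePlus, moveMinus, List.orderedInsert_erase _ _ (List.count_pos_iff.1 hy)
      (isSuperRow_iff.1 hP.2.2.2).1, List.erase_orderedInsert]

lemma flipStep_movePlus {L : List (A ⊕ B)} (hL : L.Nodup) (c : Multiset A × Multiset B) :
    FlipStep (fun P => IsSuperRowPair parA parB P ∧ content P = c)
      (signWord parA parB L) movePlus moveMinus := by
  rintro P M y T ⟨hP, rfl⟩ hM hT h
  obtain ⟨hm, hn, h'⟩ := treduce_blockWord_flip hL hP.plusCount_le_one hM hT h
  refine ⟨⟨hP.movePlus hn, content_movePlus hm⟩, ?_, moveMinus_movePlus hP hm⟩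
  rwa [signWord, plusCount_movePlus, plusCount_swap_movePlus]

/-- The dual of the sign word of `P` is the sign word of the swapped pair, with the letters in
reverse order, and `moveMinus` is `movePlus` conjugated by the swap. -/
lemma flipStep_moveMinus {L : List (A ⊕ B)} (hL : L.Nodup) (c : Multiset A × Multiset B) :
    FlipStep (fun P => IsSuperRowPair parA parB P ∧ content P = c)
      (fun P => dualWord (signWord parA parB L P)) moveMinus movePlus := by
  rintro P M y T ⟨hP, rfl⟩ hM hT h
  dsimp only at h ⊢
  rw [signWord, dualWord_blockWord] at h
  obtain ⟨⟨hP', hc⟩, h', hundo⟩ := flipStep_movePlus (List.nodup_reverse.2 hL) (content P)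
    P.swap M y T ⟨isSuperRowPair_swap.2 hP, content_swap P⟩ hM hT
    (by rwa [signWord, Prod.swap_swap])
  rw [moveMinus_eq_swap_movePlus_swap] at hundo
  rw [moveMinus_eq_swap_movePlus_swap P y]
  refine ⟨⟨isSuperRowPair_swap.2 hP', by rw [content_swap, hc]⟩, ?_, Prod.swap_inj.1 hundo⟩
  rwa [signWord, dualWord_blockWord, Prod.swap_swap]

lemma balance_signWord_of_content_eq {P Q : (List A × List B) × (List A × List B)}
    (h : content Q = content P) :
    balance (signWord parA parB (signLetters P) Q) = shape Q.1 - shape Q.2 := by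
  rw [← signLetters_eq_of_content_eq h, ← tsignSeq_eq_signWord, balance_tsignSeq]

lemma varsigma_eq_flipRun_of_gt {P : (List A × List B) × (List A × List B)} {L : List (A ⊕ B)}
    (hL : signLetters P = L) (h : shape P.2 < shape P.1) :
    varsigma parA parB P =
      flipRun (signWord parA parB L) movePlus (shape P.1 - shape P.2).toNat P := by
  dsimp only [varsigma, shape] at h ⊢
  rw [if_neg h.ne', if_pos h, flipRun, ← hL, ← tsignSeq_eq_signWord]

lemma varsigma_eq_flipRun_of_lt {P : (List A × List B) × (List A × List B)} {L : List (A ⊕ B)}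
    (hL : signLetters P = L) (h : shape P.1 < shape P.2) :
    varsigma parA parB P = flipRun (fun Q => dualWord (signWord parA parB L Q)) moveMinus
      (shape P.2 - shape P.1).toNat P := by
  dsimp only [varsigma, shape] at h ⊢
  rw [if_neg h.ne, if_neg h.not_gt, flipRun, treduce_dualWord, map_snd_take_filter_dualWord, ← hL,
    ← tsignSeq_eq_signWord]

lemma varsigma_spec_of_gt {P : (List A × List B) × (List A × List B)}
    (hP : IsSuperRowPair parA parB P) (h : shape P.2 < shape P.1) :
    IsLevelOne parA parB (varsigma parA parB P).1 (shape P.2) ∧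
      IsLevelOne parA parB (varsigma parA parB P).2 (shape P.1) ∧
      varsigma parA parB (varsigma parA parB P) = P ∧
      content (varsigma parA parB P) = content P := by
  obtain ⟨⟨hQ, hc⟩, hbal, hback⟩ :=
    (flipStep_movePlus (signLetters_nodup P) (content P)).flipRun_spec
      (w' := fun Q => dualWord (signWord parA parB (signLetters P) Q))
      (fun Q => treduce_dualWord _) ⟨hP, rfl⟩ (d := (shape P.1 - shape P.2).toNat)
      (by rw [balance_signWord_of_content_eq rfl]; omega)
  rw [← varsigma_eq_flipRun_of_gt rfl h] at hQ hc hbal hback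
  rw [balance_signWord_of_content_eq hc] at hbal
  have hsum := shape_add_shape_eq_of_content_eq hc
  have hs₁ : shape (varsigma parA parB P).1 = shape P.2 := by omega
  have hs₂ : shape (varsigma parA parB P).2 = shape P.1 := by omega
  refine ⟨⟨hQ.1, hQ.2.1, hs₁⟩, ⟨hQ.2.2.1, hQ.2.2.2, hs₂⟩, ?_, hc⟩
  rwa [varsigma_eq_flipRun_of_lt (signLetters_eq_of_content_eq hc) (by omega), hs₁, hs₂]

lemma varsigma_spec_of_lt {P : (List A × List B) × (List A × List B)}
    (hP : IsSuperRowPair parA parB P) (h : shape P.1 < shape P.2) :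
    IsLevelOne parA parB (varsigma parA parB P).1 (shape P.2) ∧
      IsLevelOne parA parB (varsigma parA parB P).2 (shape P.1) ∧
      varsigma parA parB (varsigma parA parB P) = P ∧
      content (varsigma parA parB P) = content P := by
  obtain ⟨⟨hQ, hc⟩, hbal, hback⟩ :=
    (flipStep_moveMinus (signLetters_nodup P) (content P)).flipRun_spec
      (w' := signWord parA parB (signLetters P))
      (fun Q => by rw [treduce_dualWord, dualWord_dualWord]) ⟨hP, rfl⟩
      (d := (shape P.2 - shape P.1).toNat)
      (by rw [balance_dualWord, balance_signWord_of_content_eq rfl]; omega)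
  rw [← varsigma_eq_flipRun_of_lt rfl h] at hQ hc hbal hback
  rw [balance_dualWord, balance_signWord_of_content_eq hc] at hbal
  have hsum := shape_add_shape_eq_of_content_eq hc
  have hs₁ : shape (varsigma parA parB P).1 = shape P.2 := by omega
  have hs₂ : shape (varsigma parA parB P).2 = shape P.1 := by omega
  refine ⟨⟨hQ.1, hQ.2.1, hs₁⟩, ⟨hQ.2.2.1, hQ.2.2.2, hs₂⟩, ?_, hc⟩
  rwa [varsigma_eq_flipRun_of_gt (signLetters_eq_of_content_eq hc) (by omega), hs₁, hs₂]

lemma varsigma_spec {k₁ k₂ : ℤ} {P : (List A × List B) × (List A × List B)}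
    (h₁ : IsLevelOne parA parB P.1 k₁) (h₂ : IsLevelOne parA parB P.2 k₂) :
    IsLevelOne parA parB (varsigma parA parB P).1 k₂ ∧
      IsLevelOne parA parB (varsigma parA parB P).2 k₁ ∧
      varsigma parA parB (varsigma parA parB P) = P ∧
      content (varsigma parA parB P) = content P := by
  have hP : IsSuperRowPair parA parB P := ⟨h₁.1, h₁.2.1, h₂.1, h₂.2.1⟩
  obtain ⟨-, -, rfl : shape P.1 = k₁⟩ := h₁
  obtain ⟨-, -, rfl : shape P.2 = k₂⟩ := h₂
  rcases lt_trichotomy (shape P.1) (shape P.2) with h | h | h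
  · exact varsigma_spec_of_lt hP h
  · have hid : varsigma parA parB P = P := by
      dsimp only [varsigma, shape] at h ⊢
      rw [if_pos h]
    rw [hid, hid]
    exact ⟨⟨hP.1, hP.2.1, h⟩, ⟨hP.2.2.1, hP.2.2.2, h.symm⟩, rfl, rfl⟩
  · exact varsigma_spec_of_gt hP h

end Tableaux

theorem varsigma_involutive_bijective_weight_preserving
    (parA : A → Bool) (parB : B → Bool) (k₁ k₂ : ℤ) :
    (∀ P : (List A × List B) × (List A × List B),
      IsLevelOne parA parB P.1 k₁ → IsLevelOne parA parB P.2 k₂ →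
        varsigma parA parB (varsigma parA parB P) = P ∧
        ((varsigma parA parB P).1.1 ++ (varsigma parA parB P).2.1).Perm
          (P.1.1 ++ P.2.1) ∧
        ((varsigma parA parB P).1.2 ++ (varsigma parA parB P).2.2).Perm
          (P.1.2 ++ P.2.2)) ∧
    Set.BijOn (varsigma parA parB)
      {P | IsLevelOne parA parB P.1 k₁ ∧ IsLevelOne parA parB P.2 k₂}
      {P | IsLevelOne parA parB P.1 k₂ ∧ IsLevelOne parA parB P.2 k₁} := by
  refine ⟨fun P h₁ h₂ => ?_, fun P hP => ?_, fun P hP Q hQ h => ?_, fun Q hQ => ?_⟩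
  · obtain ⟨-, -, hinv, hc⟩ := varsigma_spec h₁ h₂
    simp only [content, Prod.ext_iff, Multiset.coe_eq_coe] at hc
    exact ⟨hinv, hc⟩
  · exact ⟨(varsigma_spec hP.1 hP.2).1, (varsigma_spec hP.1 hP.2).2.1⟩
  · rw [← (varsigma_spec hP.1 hP.2).2.2.1, h, (varsigma_spec hQ.1 hQ.2).2.2.1]
  · obtain ⟨h₁, h₂, hinv, -⟩ := varsigma_spec hQ.1 hQ.2
    exact ⟨varsigma parA parB Q, ⟨h₁, h₂⟩, hinv⟩

end KP
end

section
/- For n ≥ 1 and generalized partitions λ, μ ∈ Z_+^n, and for any d ≥ 0 such that λ + (d^n) and μ + (d^n) are partitions, the Kostka–Foulkes polynomial K_{λ+(d^n), μ+(d^n)}(q) is independent of the choice of such d. -/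
/-!
STATEMENT 11: Stability of Kostka–Foulkes polynomials: for generalized partitions
`λ, μ ∈ ℤ₊ⁿ` and any `d ≥ 0` with `λ + (dⁿ)` and `μ + (dⁿ)` partitions, the
Kostka–Foulkes polynomial `K_{λ+(dⁿ), μ+(dⁿ)}(q)` does not depend on the choice of `d`.

`K_{λμ}(q)` is defined via the Lascoux–Schützenberger charge:
`K_{λμ}(q) = Σ_{T ∈ SST_{[n]}(λ)_μ} q^{c(T)}`; we state the equality of all
`q`-coefficients.
-/

namespace KP

/-! ### The Lascoux–Schützenberger charge -/

/-- The index of the letter `r` in the charge of a standard word. -/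
def chargeIdx (w : List ℕ) : ℕ → ℕ
  | 0 => 0
  | 1 => 0
  | (r+2) => chargeIdx w (r+1) + (if w.idxOf (r+1) < w.idxOf (r+2) then 1 else 0)

/-- The charge of a standard word (a permutation of `1, …, k`). -/
def chargeStd (w : List ℕ) : ℕ :=
  ((List.range w.length).map fun r => chargeIdx w (r+1)).sum

/-- Find the nearest occurrence of the letter `r` strictly to the left of position `p`,
cyclically. -/
def findLeftCyc (w : List ℕ) (p r : ℕ) : Option ℕ :=
  match ((List.range p).reverse).find? (fun j => w.getD j 0 = r) with
  | some j => some j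
  | none => ((List.range w.length).reverse).find? (fun j => w.getD j 0 = r)

/-- Positions of one standard subword, extracted cyclically right-to-left. -/
def extractAux (w : List ℕ) : ℕ → ℕ → ℕ → List ℕ
  | 0, _, _ => []
  | (fuel+1), p, r =>
    match findLeftCyc w p r with
    | none => []
    | some j => j :: extractAux w fuel j (r+1)

def extract (w : List ℕ) : List ℕ :=
  extractAux w (w.foldr max 0) w.length 1

/-- The standard subword of `w` supported on the positions `ps`. -/
def subwordAt (w : List ℕ) (ps : List ℕ) : List ℕ :=
  (List.insertionSort (· ≤ ·) ps).map (fun j => w.getD j 0)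

/-- Remove the positions `ps` from `w`. -/
def removeAt (w : List ℕ) (ps : List ℕ) : List ℕ :=
  (w.zipIdx.filter (fun x => x.2 ∉ ps)).map Prod.fst

def chargeAux : ℕ → List ℕ → ℕ
  | 0, _ => 0
  | (fuel+1), w =>
    let ps := extract w
    if ps.isEmpty then 0
    else chargeStd (subwordAt w ps) + chargeAux fuel (removeAt w ps)

/-- The Lascoux–Schützenberger charge of a word. -/
def chargeW (w : List ℕ) : ℕ := chargeAux w.length w

/-! ### Tableaux (row representation, entries in `{1, …, n}`) -/

def RowAdj (u v : List ℕ) : Prop :=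
  v.length ≤ u.length ∧ ∀ i : ℕ, ∀ x ∈ u[i]?, ∀ y ∈ v[i]?, x < y

def IsSSYTr (t : List (List ℕ)) : Prop :=
  (∀ l ∈ t, l.Pairwise (· ≤ ·) ∧ l ≠ []) ∧ t.Chain' RowAdj

/-- The row reading word (rows bottom to top, each left to right). -/
def readRow (T : List (List ℕ)) : List ℕ := T.reverse.flatten

/-- The charge of a semistandard tableau. -/
def chargeT (T : List (List ℕ)) : ℕ := chargeW (readRow T)

/-- The coefficient of `q^k` in `K_{λμ}(q) = Σ_T q^{c(T)}`, the sum being over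
semistandard tableaux of shape `lam`, entries in `{1,…,n}` and weight `mu`. -/
noncomputable def KFcoeff (n : ℕ) (lam mu : Fin n → ℕ) (k : ℕ) : ℕ :=
  {T : List (List ℕ) | IsSSYTr T ∧
    (∀ i : ℕ, (T.getD i []).length = if h : i < n then lam ⟨i, h⟩ else 0) ∧
    (∀ x ∈ T.flatten, 1 ≤ x ∧ x ≤ n) ∧
    (∀ i : Fin n, T.flatten.count ((i : ℕ) + 1) = mu i) ∧
    chargeT T = k}.ncard

/-!
Every tableau of shape `λ + (1ⁿ)` with entries in `{1, …, n}` has first column `1, 2, …, n`, so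
deleting that column is a bijection onto the tableaux of shape `λ`, lowering the weight by `(1ⁿ)`.
It also preserves the charge. Scanning the reading word cyclically right to left for `1, 2, …`,
the charge algorithm first extracts exactly the first-column entries (each taken at the end of
the run of equal entries its row starts with). This subword reads `n ⋯ 2 1`, so its charge is
`0`, and removing it leaves the reading word of the tableau without its first column. Hence
`K_{λ + (1ⁿ), μ + (1ⁿ)} = K_{λμ}`, and iterating compares both shifts `d`, `d'` with `d + d'`.
-/

open List

section LeadingRun

variable {r : ℕ}

lemma exists_eq_replicate_append {S : List ℕ} (hS : S.Pairwise (· ≤ ·)) (hr : ∀ x ∈ S, r ≤ x) :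
    ∃ c S', S = replicate c r ++ S' ∧ ∀ x ∈ S', r < x := by
  induction S with
  | nil => exact ⟨0, [], rfl, by simp⟩
  | cons a S ih =>
    obtain ⟨ha, hS'⟩ := pairwise_cons.mp hS
    rcases (hr a mem_cons_self).eq_or_lt with rfl | hlt
    · obtain ⟨c, S', rfl, hgt⟩ := ih hS' fun x hx => hr x (mem_cons_of_mem _ hx)
      exact ⟨c + 1, S', rfl, hgt⟩
    · exact ⟨0, a :: S, rfl, by simpa using ⟨hlt, fun x hx => hlt.trans_le (ha x hx)⟩⟩

lemma count_replicate_append {c : ℕ} {S' : List ℕ} (h : ∀ x ∈ S', r < x) :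
    (replicate c r ++ S').count r = c := by
  rw [count_append, count_replicate_self, count_eq_zero_of_not_mem fun hr => (h r hr).false,
    add_zero]

variable {S : List ℕ}

lemma getD_cons_of_le_count (hS : S.Pairwise (· ≤ ·)) (hr : ∀ x ∈ S, r ≤ x) {i : ℕ}
    (hi : i ≤ S.count r) : (r :: S).getD i 0 = r := by
  obtain ⟨c, S', rfl, hgt⟩ := exists_eq_replicate_append hS hr
  rw [count_replicate_append hgt] at hi
  rw [← cons_append, ← replicate_succ, getD_append _ _ _ _ (by simpa using Nat.lt_succ_of_le hi),
    getD_replicate _ (Nat.lt_succ_of_le hi)]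

lemma lt_getD_cons_of_count_lt (hS : S.Pairwise (· ≤ ·)) (hr : ∀ x ∈ S, r ≤ x) {i : ℕ}
    (hi : S.count r < i) (hiS : i ≤ S.length) : r < (r :: S).getD i 0 := by
  obtain ⟨c, S', rfl, hgt⟩ := exists_eq_replicate_append hS hr
  rw [count_replicate_append hgt] at hi
  rw [length_append, length_replicate] at hiS
  rw [← cons_append, ← replicate_succ, getD_append_right _ _ _ _ (by simpa using hi),
    length_replicate, getD_eq_getElem _ _ (by omega)]
  exact hgt _ (getElem_mem _)

lemma eraseIdx_cons_count (hS : S.Pairwise (· ≤ ·)) (hr : ∀ x ∈ S, r ≤ x) :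
    (r :: S).eraseIdx (S.count r) = S := by
  obtain ⟨c, S', rfl, hgt⟩ := exists_eq_replicate_append hS hr
  rw [count_replicate_append hgt, ← cons_append, ← replicate_succ,
    eraseIdx_append_of_lt_length (by simp), eraseIdx_replicate, if_pos (by simp)]
  rfl

end LeadingRun

lemma getD_append_append (u L v : List ℕ) {i : ℕ} (hi : i < L.length) :
    (u ++ L ++ v).getD (u.length + i) 0 = L.getD i 0 := by
  rw [append_assoc, getD_append_right _ _ _ _ (by omega), Nat.add_sub_cancel_left,
    getD_append _ _ _ _ hi]

lemma getD_eq_nil_iff {α : Type*} {T : List (List α)} (hne : ∀ L ∈ T, L ≠ []) {i : ℕ} :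
    T.getD i [] = [] ↔ T.length ≤ i := by
  refine ⟨fun h => ?_, getD_eq_default _ _⟩
  by_contra hi
  exact hne _ (getElem_mem (not_le.mp hi)) (by rwa [getD_eq_getElem _ _ (not_le.mp hi)] at h)

lemma getD_filter_not_isEmpty {α : Type*} {T : List (List α)}
    (hT : T.Pairwise fun u v => v.length ≤ u.length) (i : ℕ) :
    (T.filter fun l => !l.isEmpty).getD i [] = T.getD i [] := by
  induction T generalizing i with
  | nil => rfl
  | cons L T ih =>
    obtain ⟨hL, hT⟩ := pairwise_cons.mp hT
    rcases eq_or_ne L [] with rfl | hne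
    · have hnil : ∀ M ∈ [] :: T, M = [] := by
        simpa using fun M hM => length_eq_zero_iff.mp (Nat.le_zero.mp (hL M hM))
      rw [filter_eq_nil_iff.mpr (by simpa using hnil), getD_nil, getD_eq_getElem?_getD]
      cases h : ([] :: T)[i]? with
      | none => rfl
      | some M => simp [hnil _ (mem_of_getElem? h)]
    · rw [filter_cons_of_pos (by simpa using hne)]
      cases i with
      | zero => rfl
      | succ i => exact ih hT i

lemma chargeStd_reverse_range' (n : ℕ) : chargeStd (range' 1 n).reverse = 0 := by
  have hidx : ∀ k, 1 ≤ k → k ≤ n → (range' 1 n).reverse.idxOf k = n - k := by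
    induction n with
    | zero => omega
    | succ m ih =>
      intro k hk1 hkn
      rw [range'_1_concat, reverse_append, reverse_singleton, singleton_append, idxOf_cons]
      by_cases h : 1 + m = k
      · simp [h]
        omega
      · rw [show ((1 + m) == k) = false by simpa using h, cond_false, ih k hk1 (by omega)]
        omega
  have hzero (r : ℕ) (hr : r + 1 ≤ n) : chargeIdx (range' 1 n).reverse (r + 1) = 0 := by
    induction r with
    | zero => rfl
    | succ s ih =>
      rw [chargeIdx, ih (by omega), hidx _ (by omega) (by omega), hidx _ (by omega) (by omega),
        if_neg (by omega)]
  refine sum_eq_zero fun x hx => ?_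
  obtain ⟨r, hr, rfl⟩ := mem_map.mp hx
  exact hzero r (by simpa using hr)

/-! ### The charge algorithm on a tableau with first column `1, …, n` -/

/-- `Q` is the list of positions that `extractAux w _ p r` visits when the scan for the letters
`r, r + 1, …` never wraps around: each letter is found strictly left of the previous one, with
no occurrence of it in between. -/
def LeftScan (w : List ℕ) : ℕ → ℕ → List ℕ → Prop
  | _, _, [] => True
  | p, r, q :: Q =>
    q < p ∧ w.getD q 0 = r ∧ (∀ j, q < j → j < p → w.getD j 0 ≠ r) ∧ LeftScan w q (r + 1) Q

namespace LeftScan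

variable {w : List ℕ}

lemma lt_start : ∀ {Q : List ℕ} {p r : ℕ}, LeftScan w p r Q → ∀ q ∈ Q, q < p
  | _ :: _, _, _, ⟨hq, _, _, hQ⟩, q', hq' => by
    rcases mem_cons.mp hq' with rfl | hq'
    exacts [hq, (hQ.lt_start q' hq').trans hq]

lemma pairwise_gt : ∀ {Q : List ℕ} {p r : ℕ}, LeftScan w p r Q → Q.Pairwise (· > ·)
  | [], _, _, _ => Pairwise.nil
  | _ :: _, _, _, ⟨_, _, _, hQ⟩ => pairwise_cons.mpr ⟨hQ.lt_start, hQ.pairwise_gt⟩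

lemma map_getD : ∀ {Q : List ℕ} {p r : ℕ}, LeftScan w p r Q →
    Q.map (w.getD · 0) = range' r Q.length
  | [], _, _, _ => rfl
  | _ :: _, _, _, ⟨_, hval, _, hQ⟩ => by
    rw [map_cons, hQ.map_getD, hval, length_cons, range'_succ]

lemma of_start_le {Q : List ℕ} {p p' r : ℕ} (h : LeftScan w p r Q) (hp : p ≤ p')
    (hgap : ∀ j, p ≤ j → j < p' → w.getD j 0 ≠ r) : LeftScan w p' r Q := by
  match Q, h with
  | [], _ => trivial
  | q :: Q, ⟨hq, hval, hfree, hQ⟩ =>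
    refine ⟨by omega, hval, fun j hj hjp => ?_, hQ⟩
    rcases lt_or_ge j p with hjp' | hjp'
    exacts [hfree j hj hjp', hgap j hjp' hjp]

end LeftScan

lemma find?_reverse_range_eq_some {P : ℕ → Bool} {p q : ℕ} (hq : q < p) (hP : P q)
    (hfree : ∀ j, q < j → j < p → P j = false) : (range p).reverse.find? P = some q := by
  induction p with
  | zero => omega
  | succ m ih =>
    rw [range_succ, reverse_append, reverse_singleton, singleton_append, find?_cons]
    rcases eq_or_ne q m with rfl | hqm
    · simp [hP]
    · rw [hfree m (by omega) (by omega)]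
      exact ih (by omega) fun j h1 h2 => hfree j h1 (by omega)

lemma findLeftCyc_eq_some {w : List ℕ} {p r q : ℕ} (hq : q < p) (hval : w.getD q 0 = r)
    (hfree : ∀ j, q < j → j < p → w.getD j 0 ≠ r) : findLeftCyc w p r = some q := by
  rw [findLeftCyc, find?_reverse_range_eq_some hq (by simpa using hval)
    fun j h1 h2 => by simpa using hfree j h1 h2]

lemma getD_of_findLeftCyc_eq_some {w : List ℕ} {p r j : ℕ} (h : findLeftCyc w p r = some j) :
    w.getD j 0 = r := by
  unfold findLeftCyc at h
  split at h
  · next hj => simpa [← Option.some.inj h] using find?_some hj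
  · simpa using find?_some h

lemma extractAux_eq_of_leftScan {w : List ℕ} :
    ∀ {Q : List ℕ} {p r : ℕ}, LeftScan w p r Q → extractAux w Q.length p r = Q
  | [], _, _, _ => rfl
  | q :: _, _, _, ⟨hq, hval, hfree, hQ⟩ => by
    rw [length_cons, extractAux, findLeftCyc_eq_some hq hval hfree]
    exact congrArg (q :: ·) (extractAux_eq_of_leftScan hQ)

lemma subwordAt_eq_of_leftScan {w Q : List ℕ} {p r : ℕ} (h : LeftScan w p r Q) :
    subwordAt w Q = (range' r Q.length).reverse := by
  have hsort : insertionSort (· ≤ ·) Q = Q.reverse :=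
    ((perm_insertionSort _ _).trans (reverse_perm Q).symm).eq_of_pairwise'
      (pairwise_insertionSort _ _) (pairwise_reverse.mpr (h.pairwise_gt.imp le_of_lt))
  rw [subwordAt, hsort, map_reverse, h.map_getD]

lemma map_fst_filter_zipIdx_ne (v : List ℕ) (o c : ℕ) :
    ((v.zipIdx o).filter fun x => x.2 ≠ o + c).map Prod.fst = v.eraseIdx c := by
  induction v generalizing o c with
  | nil => rfl
  | cons a v ih =>
    cases c with
    | zero =>
      rw [zipIdx_cons, filter_cons_of_neg (by simp), eraseIdx_cons_zero]
      refine (congrArg _ (filter_eq_self.mpr fun x hx => ?_)).trans (zipIdx_map_fst _ _)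
      simpa using (ne_of_gt (mem_zipIdx hx).1 : _)
    | succ c =>
      rw [zipIdx_cons, filter_cons_of_pos (by simp), map_cons, eraseIdx_cons_succ,
        show o + (c + 1) = o + 1 + c by omega, ih]

lemma removeAt_append_cons {u v ps : List ℕ} {c : ℕ} (hps : ∀ j ∈ ps, j < u.length) :
    removeAt (u ++ v) ((u.length + c) :: ps) = removeAt u ps ++ v.eraseIdx c := by
  rw [removeAt, zipIdx_append, filter_append, map_append, zero_add,
    ← map_fst_filter_zipIdx_ne v u.length c]
  congr 2
  · refine filter_congr fun x hx => ?_
    have := (mem_zipIdx hx).2.1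
    simp [show x.2 ≠ u.length + c by omega]
  · refine filter_congr fun x hx => ?_
    have := (mem_zipIdx hx).1
    simp only [mem_cons, not_or, decide_eq_decide]
    exact and_iff_left fun h => (hps _ h).not_ge this

lemma length_removeAt_lt {w ps : List ℕ} {j : ℕ} (hj : j ∈ ps) (hjw : j < w.length) :
    (removeAt w ps).length < w.length := by
  rw [removeAt, length_map, ← length_zipIdx (l := w), length_filter_lt_length_iff_exists]
  exact ⟨(w[j], j), mem_zipIdx_iff_getElem?.mpr (getElem?_eq_getElem hjw), by simpa using hj⟩

lemma chargeAux_nil (f : ℕ) : chargeAux f [] = 0 := by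
  cases f <;> rfl

lemma length_removeAt_extract_lt {w : List ℕ} (h : extract w ≠ []) :
    (removeAt w (extract w)).length < w.length := by
  obtain ⟨j, Q, hjQ⟩ := exists_cons_of_ne_nil h
  have hval : w.getD j 0 = 1 := by
    unfold extract at hjQ
    cases hf : w.foldr max 0 with
    | zero => simp [hf, extractAux] at hjQ
    | succ m =>
      rw [hf, extractAux] at hjQ
      split at hjQ
      · exact absurd hjQ (by simp)
      · next j' hj' => exact (cons_eq_cons.mp hjQ).1 ▸ getD_of_findLeftCyc_eq_some hj'
  refine length_removeAt_lt (hjQ ▸ mem_cons_self) ?_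
  by_contra hjw
  rw [getD_eq_default _ _ (by omega)] at hval
  omega

lemma chargeAux_congr_fuel : ∀ {f g : ℕ} {w : List ℕ}, w.length ≤ f → w.length ≤ g →
    chargeAux f w = chargeAux g w
  | 0, _, w, hf, _ | _, 0, w, _, hf => by
    rw [length_eq_zero_iff.mp (Nat.le_zero.mp hf), chargeAux_nil, chargeAux_nil]
  | f + 1, g + 1, w, hf, hg => by
    by_cases hE : extract w = []
    · simp [chargeAux, hE]
    · have := length_removeAt_extract_lt hE
      simp only [chargeAux]
      rw [chargeAux_congr_fuel (f := f) (g := g) (by omega) (by omega)]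

/-- The rows of `T` are weakly increasing and start with `r, r + 1, …`, i.e. the first column of
`T` is `r, r + 1, …, r + T.length - 1`. -/
inductive HeadedRows : ℕ → List (List ℕ) → Prop
  | nil (r : ℕ) : HeadedRows r []
  | cons {r : ℕ} {S : List ℕ} {T : List (List ℕ)} : S.Pairwise (· ≤ ·) → (∀ x ∈ S, r ≤ x) →
      HeadedRows (r + 1) T → HeadedRows r ((r :: S) :: T)

/-- For each row, the position in `readRow` of the last entry of the run of equal entries the row
starts with. -/
def scanPos : List (List ℕ) → List ℕ
  | [] => []
  | L :: T => ((readRow T).length + L.tail.count (L.headD 0)) :: scanPos T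

lemma length_scanPos (T : List (List ℕ)) : (scanPos T).length = T.length := by
  induction T with
  | nil => rfl
  | cons L T ih => simp [scanPos, ih]

lemma readRow_cons (L : List ℕ) (T : List (List ℕ)) : readRow (L :: T) = readRow T ++ L := by
  simp [readRow]

lemma readRow_perm_flatten (T : List (List ℕ)) : readRow T ~ T.flatten :=
  (reverse_perm T).flatten

namespace HeadedRows

variable {r : ℕ} {T : List (List ℕ)}

lemma leftScan (hT : HeadedRows r T) (v : List ℕ) :
    LeftScan (readRow T ++ v) (readRow T).length r (scanPos T) := by
  induction hT generalizing v with
  | nil => trivial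
  | @cons r S T hS hr _ ih =>
    have hrow : ∀ i < S.length + 1,
        (readRow ((r :: S) :: T) ++ v).getD ((readRow T).length + i) 0 = (r :: S).getD i 0 := by
      intro i hi
      rw [readRow_cons]
      exact getD_append_append (readRow T) (r :: S) v hi
    have hc : S.count r ≤ S.length := count_le_length
    have hlen : (readRow ((r :: S) :: T)).length = (readRow T).length + (S.length + 1) := by
      simp [readRow_cons]
    simp only [scanPos, tail_cons, headD_cons]
    refine ⟨by omega, by rw [hrow _ (by omega), getD_cons_of_le_count hS hr le_rfl], ?_, ?_⟩
    · intro j hj1 hj2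
      obtain ⟨i, rfl⟩ : ∃ i, j = (readRow T).length + i := ⟨j - (readRow T).length, by omega⟩
      rw [hrow i (by omega)]
      exact (lt_getD_cons_of_count_lt hS hr (by omega) (by omega)).ne'
    · have hscan := ih ((r :: S) ++ v)
      rw [← append_assoc, ← readRow_cons] at hscan
      refine hscan.of_start_le (by omega) fun j hj1 hj2 => ?_
      obtain ⟨i, rfl⟩ : ∃ i, j = (readRow T).length + i := ⟨j - (readRow T).length, by omega⟩
      rw [hrow i (by omega), getD_cons_of_le_count hS hr (by omega)]
      omega

lemma removeAt_scanPos (hT : HeadedRows r T) :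
    removeAt (readRow T) (scanPos T) = readRow (T.map tail) := by
  induction hT with
  | nil => rfl
  | @cons r S T hS hr hT ih =>
    have hps := (hT.leftScan []).lt_start
    simp only [scanPos, tail_cons, headD_cons, map_cons, readRow_cons]
    rw [removeAt_append_cons hps, ih, eraseIdx_cons_count hS hr]

lemma flatten_perm (hT : HeadedRows r T) :
    T.flatten ~ range' r T.length ++ (T.map tail).flatten := by
  induction hT with
  | nil => rfl
  | @cons r S T _ _ _ ih =>
    simp only [flatten_cons, map_cons, tail_cons, length_cons, range'_succ, cons_append]
    exact ((ih.append_left S).trans (perm_append_comm_assoc _ _ _)).cons r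

lemma forall_mem (hT : HeadedRows r T) : ∀ L ∈ T, L.Pairwise (· ≤ ·) ∧ L ≠ [] := by
  induction hT with
  | nil => simp
  | cons hS hr _ ih =>
    intro L hL
    rcases mem_cons.mp hL with rfl | hL
    exacts [⟨pairwise_cons.mpr ⟨hr, hS⟩, cons_ne_nil _ _⟩, ih L hL]

lemma exists_getElem_eq_cons (hT : HeadedRows r T) (i : ℕ) (hi : i < T.length) :
    ∃ S, T[i] = (r + i) :: S := by
  induction hT generalizing i with
  | nil => simp at hi
  | @cons r S T _ _ _ ih =>
    cases i with
    | zero => exact ⟨S, rfl⟩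
    | succ i =>
      obtain ⟨S', hS'⟩ := ih i (by simpa using hi)
      exact ⟨S', by rw [getElem_cons_succ, hS', show r + 1 + i = r + (i + 1) by omega]⟩

lemma readRow_perm (hT : HeadedRows r T) :
    readRow T ~ range' r T.length ++ readRow (T.map tail) :=
  (readRow_perm_flatten T).trans
    (hT.flatten_perm.trans ((readRow_perm_flatten _).symm.append_left _))

lemma extract_readRow (hT : HeadedRows 1 T) (hle : ∀ x ∈ T.flatten, x ≤ T.length) :
    extract (readRow T) = scanPos T := by
  rcases eq_or_ne T [] with rfl | hne
  · rfl
  have hmax : (readRow T).foldr max 0 = T.length := by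
    refine le_antisymm (max_le_of_forall_le _ _ fun x hx => hle x ?_) (le_max_of_le ?_ le_rfl)
    · exact (readRow_perm_flatten T).subset hx
    · refine hT.readRow_perm.symm.subset (mem_append_left _ (mem_range'_1.mpr ⟨?_, by omega⟩))
      exact length_pos_iff.mpr hne
  have hscan := hT.leftScan []
  rw [append_nil] at hscan
  rw [extract, hmax, ← length_scanPos]
  exact extractAux_eq_of_leftScan hscan

theorem chargeT_map_tail (hT : HeadedRows 1 T) (hle : ∀ x ∈ T.flatten, x ≤ T.length) :
    chargeT (T.map tail) = chargeT T := by
  rcases eq_or_ne T [] with rfl | hne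
  · rfl
  have hpos : 0 < T.length := length_pos_iff.mpr hne
  have hscan := hT.leftScan []
  rw [append_nil] at hscan
  have hlen := hT.readRow_perm.length_eq
  rw [length_append, length_range'] at hlen
  obtain ⟨m, hm⟩ : ∃ m, (readRow T).length = m + 1 := ⟨_, (Nat.sub_add_cancel (by omega)).symm⟩
  have hne' : (scanPos T).isEmpty = false := by
    rw [isEmpty_eq_false_iff, ← length_pos_iff, length_scanPos]
    exact hpos
  rw [chargeT, chargeT, chargeW, chargeW, hm]
  simp only [chargeAux, hT.extract_readRow hle, hne', Bool.false_eq_true, if_false]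
  rw [subwordAt_eq_of_leftScan hscan, length_scanPos, chargeStd_reverse_range', zero_add,
    hT.removeAt_scanPos]
  exact chargeAux_congr_fuel le_rfl (by omega)

end HeadedRows

lemma headedRows_map_range {r n : ℕ} {g : ℕ → List ℕ}
    (hg : ∀ i < n, (g i).Pairwise (· ≤ ·) ∧ ∀ x ∈ g i, i + r ≤ x) :
    HeadedRows r ((range n).map fun i => (i + r) :: g i) := by
  induction n generalizing r g with
  | zero => exact .nil r
  | succ n ih =>
    rw [range_succ_eq_map, map_cons, map_map, zero_add]
    have hrest := ih (r := r + 1) (g := g ∘ Nat.succ) fun i hi => by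
      simpa [Nat.succ_eq_add_one, add_assoc, add_comm 1 r] using hg (i + 1) (by omega)
    have hfun : ((fun i => (i + r) :: g i) ∘ Nat.succ) =
        fun i => (i + (r + 1)) :: (g ∘ Nat.succ) i := by
      funext i
      simp only [Function.comp_apply, Nat.succ_eq_add_one, cons.injEq, and_true]
      omega
    rw [hfun]
    exact .cons (hg 0 (by omega)).1 (by simpa using (hg 0 (by omega)).2) hrest

/-! ### Removing the first column -/

namespace RowAdj

variable {u v w : List ℕ}

lemma trans (h₁ : RowAdj u v) (h₂ : RowAdj v w) : RowAdj u w := by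
  refine ⟨h₂.1.trans h₁.1, fun i x hx z hz => ?_⟩
  have hiv : i < v.length := (List.getElem?_eq_some_iff.mp hz).1.trans_le h₂.1
  exact (h₁.2 i x hx _ (getElem?_eq_getElem hiv)).trans (h₂.2 i _ (getElem?_eq_getElem hiv) z hz)

instance : Trans RowAdj RowAdj RowAdj := ⟨trans⟩

lemma tail (h : RowAdj u v) : RowAdj u.tail v.tail := by
  refine ⟨by simpa using Nat.sub_le_sub_right h.1 1, fun i x hx y hy => ?_⟩
  rw [getElem?_tail] at hx hy
  exact h.2 (i + 1) x hx y hy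

lemma cons {a b : ℕ} (hab : a < b) (h : RowAdj u v) : RowAdj (a :: u) (b :: v) := by
  refine ⟨by simpa using h.1, fun i x hx y hy => ?_⟩
  cases i with
  | zero => simp_all
  | succ i => exact h.2 i x hx y hy

lemma nil_right (u : List ℕ) : RowAdj u [] := ⟨by simp, by simp⟩

lemma lt_of_mem {r : ℕ} (h : RowAdj u v) (hr : ∀ x ∈ u, r ≤ x) : ∀ y ∈ v, r < y := by
  intro y hy
  obtain ⟨j, hj, rfl⟩ := getElem_of_mem hy
  have hju : j < u.length := hj.trans_le h.1
  exact (hr _ (getElem_mem hju)).trans_lt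
    (h.2 j _ (getElem?_eq_getElem hju) _ (getElem?_eq_getElem hj))

end RowAdj

namespace IsSSYTr

variable {T : List (List ℕ)}

lemma pairwise (hT : IsSSYTr T) : T.Pairwise RowAdj := isChain_iff_pairwise.mp hT.2

lemma of_cons {L : List ℕ} (hT : IsSSYTr (L :: T)) : IsSSYTr T :=
  ⟨fun l hl => hT.1 l (mem_cons_of_mem _ hl), hT.2.tail⟩

lemma lt_of_mem_flatten_of_cons {L : List ℕ} {r : ℕ} (hT : IsSSYTr (L :: T))
    (hr : ∀ x ∈ L, r ≤ x) : ∀ y ∈ T.flatten, r < y := by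
  intro y hy
  obtain ⟨M, hM, hyM⟩ := mem_flatten.mp hy
  exact ((pairwise_cons.mp hT.pairwise).1 M hM).lt_of_mem hr y hyM

lemma rowAdj_getD (hT : IsSSYTr T) (i : ℕ) : RowAdj (T.getD i []) (T.getD (i + 1) []) := by
  by_cases hi : i + 1 < T.length
  · rw [getD_eq_getElem _ _ hi, getD_eq_getElem _ _ (by omega)]
    exact isChain_iff_getElem.mp hT.2 i hi
  · rw [getD_eq_default _ _ (show T.length ≤ i + 1 by omega)]
    exact RowAdj.nil_right _

lemma add_le_of_mem_getD {r : ℕ} (hT : IsSSYTr T) (hr : ∀ x ∈ T.flatten, r ≤ x) :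
    ∀ i, ∀ x ∈ T.getD i [], r + i ≤ x := by
  induction T generalizing r with
  | nil => simp
  | cons L T ih =>
    have hL : ∀ x ∈ L, r ≤ x := fun x hx => hr x (mem_flatten_of_mem mem_cons_self hx)
    rintro (_ | i) x hx
    · exact hL x hx
    · have := ih hT.of_cons (hT.lt_of_mem_flatten_of_cons hL) i x hx
      omega

lemma headedRows {r : ℕ} (hT : IsSSYTr T) (hlo : ∀ x ∈ T.flatten, r ≤ x)
    (hhi : ∀ x ∈ T.flatten, x < r + T.length) : HeadedRows r T := by
  induction T generalizing r with
  | nil => exact .nil r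
  | cons L T ih =>
    obtain ⟨a, S, rfl⟩ := exists_cons_of_ne_nil (hT.1 _ mem_cons_self).2
    have hL : ∀ x ∈ a :: S, r ≤ x := fun x hx => hlo x (mem_flatten_of_mem mem_cons_self hx)
    have hrest : HeadedRows (r + 1) T :=
      ih hT.of_cons (hT.lt_of_mem_flatten_of_cons hL) fun x hx => by
        have := hhi x (mem_append_right _ hx)
        simp only [length_cons] at this
        omega
    have ha : a = r := by
      refine le_antisymm ?_ (hL a mem_cons_self)
      cases hrest with
      | nil => simpa using hhi a (by simp)
      | cons =>
        have hadj := (pairwise_cons.mp hT.pairwise).1 _ mem_cons_self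
        exact Nat.le_of_lt_succ (hadj.2 0 a rfl _ rfl)
    subst ha
    obtain ⟨hra, hS⟩ := pairwise_cons.mp (hT.1 _ mem_cons_self).1
    exact .cons hS hra hrest

end IsSSYTr

def removeFirstColumn (T : List (List ℕ)) : List (List ℕ) :=
  (T.map tail).filter fun l => !l.isEmpty

def addFirstColumn (n : ℕ) (T : List (List ℕ)) : List (List ℕ) :=
  (range n).map fun i => (i + 1) :: T.getD i []

lemma getD_addFirstColumn (n : ℕ) (T : List (List ℕ)) (i : ℕ) :
    (addFirstColumn n T).getD i [] = if i < n then (i + 1) :: T.getD i [] else [] := by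
  split_ifs with hi
  · rw [addFirstColumn, getD_eq_getElem _ _ (by simpa using hi), getElem_map, getElem_range]
  · exact getD_eq_default _ _ (by simpa [addFirstColumn] using hi)

lemma map_tail_addFirstColumn {n : ℕ} {T : List (List ℕ)} (hT : T.length ≤ n) :
    (addFirstColumn n T).map tail = T ++ replicate (n - T.length) [] := by
  refine ext_getElem (by simp [addFirstColumn]; omega) fun i h₁ _ => ?_
  simp only [addFirstColumn, getElem_map, getElem_range, tail_cons]
  rcases lt_or_ge i T.length with hi | hi
  · rw [getElem_append_left hi, getD_eq_getElem _ _ hi]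
  · rw [getElem_append_right hi, getElem_replicate, getD_eq_default _ _ hi]

lemma readRow_removeFirstColumn (T : List (List ℕ)) :
    readRow (removeFirstColumn T) = readRow (T.map tail) := by
  rw [readRow, readRow, removeFirstColumn, ← filter_reverse, flatten_filter_not_isEmpty]

lemma removeFirstColumn_addFirstColumn {n : ℕ} {T : List (List ℕ)} (hne : ∀ L ∈ T, L ≠ [])
    (hT : T.length ≤ n) : removeFirstColumn (addFirstColumn n T) = T := by
  rw [removeFirstColumn, map_tail_addFirstColumn hT, filter_append,
    filter_eq_self.mpr (by simpa using hne), filter_eq_nil_iff.mpr (by simp), append_nil]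

lemma HeadedRows.addFirstColumn_removeFirstColumn {T : List (List ℕ)} (hT : HeadedRows 1 T)
    (hmono : (T.map tail).Pairwise fun u v => v.length ≤ u.length) :
    addFirstColumn T.length (removeFirstColumn T) = T := by
  refine ext_getElem (by simp [addFirstColumn]) fun i _ hi => ?_
  obtain ⟨S, hS⟩ := hT.exists_getElem_eq_cons i hi
  have hrow : (removeFirstColumn T).getD i [] = S := by
    rw [removeFirstColumn, getD_filter_not_isEmpty hmono, getD_eq_getElem _ _ (by simpa using hi),
      getElem_map, hS, tail_cons]
  simp only [addFirstColumn, getElem_map, getElem_range, hrow, hS, add_comm]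

lemma IsSSYTr.headedRows_addFirstColumn {T : List (List ℕ)} (hT : IsSSYTr T)
    (hpos : ∀ x ∈ T.flatten, 1 ≤ x) (n : ℕ) : HeadedRows 1 (addFirstColumn n T) := by
  refine headedRows_map_range fun i _ => ⟨?_, fun x hx => ?_⟩
  · rcases lt_or_ge i T.length with hi | hi
    · rw [getD_eq_getElem _ _ hi]
      exact (hT.1 _ (getElem_mem hi)).1
    · rw [getD_eq_default _ _ hi]
      exact .nil
  · have := hT.add_le_of_mem_getD hpos i x hx
    omega

lemma IsSSYTr.addFirstColumn {T : List (List ℕ)} (hT : IsSSYTr T)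
    (hpos : ∀ x ∈ T.flatten, 1 ≤ x) (n : ℕ) : IsSSYTr (addFirstColumn n T) := by
  refine ⟨(hT.headedRows_addFirstColumn hpos n).forall_mem, ?_⟩
  change List.IsChain _ _
  rw [KP.addFirstColumn, isChain_map, isChain_range]
  exact fun m _ => (hT.rowAdj_getD m).cons (by omega)

lemma flatten_addFirstColumn_perm {n : ℕ} {T : List (List ℕ)}
    (hT : HeadedRows 1 (addFirstColumn n T)) (hle : T.length ≤ n) :
    (addFirstColumn n T).flatten ~ range' 1 n ++ T.flatten := by
  have := hT.flatten_perm
  rwa [map_tail_addFirstColumn hle, flatten_append, flatten_replicate_nil, append_nil,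
    addFirstColumn, length_map, length_range] at this

def IsKFTableau (n : ℕ) (lam mu : Fin n → ℕ) (k : ℕ) (T : List (List ℕ)) : Prop :=
  IsSSYTr T ∧
    (∀ i : ℕ, (T.getD i []).length = if h : i < n then lam ⟨i, h⟩ else 0) ∧
    (∀ x ∈ T.flatten, 1 ≤ x ∧ x ≤ n) ∧
    (∀ i : Fin n, T.flatten.count ((i : ℕ) + 1) = mu i) ∧
    chargeT T = k

lemma KFcoeff_eq_ncard (n : ℕ) (lam mu : Fin n → ℕ) (k : ℕ) :
    KFcoeff n lam mu k = {T | IsKFTableau n lam mu k T}.ncard := rfl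

lemma count_range'_one {n c : ℕ} (h₁ : 1 ≤ c) (h₂ : c ≤ n) : (range' 1 n).count c = 1 :=
  count_eq_one_of_mem nodup_range' (mem_range'_1.mpr ⟨h₁, by omega⟩)

namespace IsKFTableau

variable {n : ℕ} {lam mu : Fin n → ℕ} {k : ℕ} {T : List (List ℕ)}

lemma length_le (hT : IsKFTableau n lam mu k T) : T.length ≤ n :=
  (getD_eq_nil_iff fun L hL => (hT.1.1 L hL).2).mp
    (length_eq_zero_iff.mp (by rw [hT.2.1 n, dif_neg (lt_irrefl n)]))

lemma length_eq (hT : IsKFTableau n (fun i => lam i + 1) (fun i => mu i + 1) k T) :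
    T.length = n := by
  refine le_antisymm hT.length_le (not_lt.mp fun hlt => ?_)
  have h := (getD_eq_nil_iff fun L hL => (hT.1.1 L hL).2).mpr le_rfl
  have := hT.2.1 T.length
  rw [h, dif_pos hlt] at this
  exact absurd this (by simp)

lemma headedRows (hT : IsKFTableau n (fun i => lam i + 1) (fun i => mu i + 1) k T) :
    HeadedRows 1 T :=
  hT.1.headedRows (fun x hx => (hT.2.2.1 x hx).1)
    fun x hx => by have := (hT.2.2.1 x hx).2; rw [hT.length_eq]; omega

lemma removeFirstColumn (hT : IsKFTableau n (fun i => lam i + 1) (fun i => mu i + 1) k T) :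
    IsKFTableau n lam mu k (removeFirstColumn T) := by
  have hlen := hT.length_eq
  have hH := hT.headedRows
  have hperm := hH.flatten_perm
  rw [hlen] at hperm
  obtain ⟨hSS, hshape, hbound, hcount, hcharge⟩ := hT
  have htails : (T.map tail).Pairwise RowAdj := hSS.pairwise.map _ fun _ _ => RowAdj.tail
  have hflat : (KP.removeFirstColumn T).flatten = (T.map tail).flatten :=
    flatten_filter_not_isEmpty
  refine ⟨⟨fun l hl => ?_, isChain_iff_pairwise.mpr (htails.filter _)⟩, fun i => ?_,
    fun x hx => ?_, fun i => ?_, ?_⟩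
  · obtain ⟨hl, hne⟩ := mem_filter.mp hl
    obtain ⟨L, hL, rfl⟩ := mem_map.mp hl
    exact ⟨(hSS.1 L hL).1.sublist (tail_sublist L), by simpa using hne⟩
  · rw [KP.removeFirstColumn, getD_filter_not_isEmpty (htails.imp (·.1)), ← tail_nil, getD_map,
      length_tail, hshape]
    split_ifs <;> simp
  · rw [hflat] at hx
    exact hbound x (hperm.symm.subset (mem_append_right _ hx))
  · have := hperm.count_eq ((i : ℕ) + 1)
    rw [hcount, count_append, count_range'_one (by omega) (by omega)] at this
    rw [hflat]
    simp only at this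
    omega
  · rw [chargeT, readRow_removeFirstColumn, ← chargeT,
      hH.chargeT_map_tail fun x hx => hlen ▸ (hbound x hx).2, hcharge]

lemma addFirstColumn (hT : IsKFTableau n lam mu k T) :
    IsKFTableau n (fun i => lam i + 1) (fun i => mu i + 1) k (KP.addFirstColumn n T) := by
  have hle := hT.length_le
  obtain ⟨hSS, hshape, hbound, hcount, hcharge⟩ := hT
  have hpos : ∀ x ∈ T.flatten, 1 ≤ x := fun x hx => (hbound x hx).1
  have hH := hSS.headedRows_addFirstColumn hpos n
  have hperm := flatten_addFirstColumn_perm hH hle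
  have hbound' : ∀ x ∈ (KP.addFirstColumn n T).flatten, 1 ≤ x ∧ x ≤ n := by
    intro x hx
    rcases mem_append.mp (hperm.subset hx) with h | h
    · rw [mem_range'_1] at h
      omega
    · exact hbound x h
  refine ⟨hSS.addFirstColumn hpos n, fun i => ?_, hbound', fun i => ?_, ?_⟩
  · rw [getD_addFirstColumn]
    split_ifs with hi
    · rw [length_cons, hshape, dif_pos hi]
    · rfl
  · rw [hperm.count_eq, count_append, count_range'_one (by omega) (by omega), hcount, add_comm]
  · rw [← hH.chargeT_map_tail, chargeT, ← readRow_removeFirstColumn,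
      removeFirstColumn_addFirstColumn (fun L hL => (hSS.1 L hL).2) hle, ← chargeT, hcharge]
    simpa [KP.addFirstColumn] using fun x hx => (hbound' x hx).2

lemma addFirstColumn_removeFirstColumn
    (hT : IsKFTableau n (fun i => lam i + 1) (fun i => mu i + 1) k T) :
    KP.addFirstColumn n (KP.removeFirstColumn T) = T :=
  hT.length_eq ▸ hT.headedRows.addFirstColumn_removeFirstColumn
    ((hT.1.pairwise.map tail fun _ _ => RowAdj.tail).imp (·.1))

end IsKFTableau

theorem KFcoeff_add_one (n : ℕ) (lam mu : Fin n → ℕ) (k : ℕ) :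
    KFcoeff n (fun i => lam i + 1) (fun i => mu i + 1) k = KFcoeff n lam mu k := by
  rw [KFcoeff_eq_ncard, KFcoeff_eq_ncard]
  refine Set.ncard_congr (fun T _ => removeFirstColumn T) (fun T hT => hT.removeFirstColumn)
    (fun T₁ T₂ h₁ h₂ h => ?_) fun T hT => ⟨addFirstColumn n T, hT.addFirstColumn, ?_⟩
  · rw [← h₁.addFirstColumn_removeFirstColumn, ← h₂.addFirstColumn_removeFirstColumn]
    exact congrArg _ h
  · exact removeFirstColumn_addFirstColumn (fun L hL => (hT.1.1 L hL).2) hT.length_le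

theorem KFcoeff_add (n : ℕ) (lam mu : Fin n → ℕ) (k j : ℕ) :
    KFcoeff n (fun i => lam i + j) (fun i => mu i + j) k = KFcoeff n lam mu k := by
  induction j with
  | zero => rfl
  | succ j ih => exact (KFcoeff_add_one n (fun i => lam i + j) (fun i => mu i + j) k).trans ih

theorem kostkaFoulkes_stable_general (n : ℕ) (lam mu : Fin n → ℤ) (d d' : ℕ)
    (hd₁ : ∀ i, 0 ≤ lam i + d) (hd₂ : ∀ i, 0 ≤ mu i + d)
    (hd₁' : ∀ i, 0 ≤ lam i + d') (hd₂' : ∀ i, 0 ≤ mu i + d') (k : ℕ) :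
    KFcoeff n (fun i => (lam i + d).toNat) (fun i => (mu i + d).toNat) k =
    KFcoeff n (fun i => (lam i + d').toNat) (fun i => (mu i + d').toNat) k := by
  have key (e m : ℕ) (hlam : ∀ i, 0 ≤ lam i + e) (hmu : ∀ i, 0 ≤ mu i + e) (he : e ≤ m) :
      KFcoeff n (fun i => (lam i + e).toNat) (fun i => (mu i + e).toNat) k =
      KFcoeff n (fun i => (lam i + m).toNat) (fun i => (mu i + m).toNat) k := by
    rw [← KFcoeff_add _ _ _ _ (m - e)]
    congr 1 <;> funext i
    · have := hlam i; omega
    · have := hmu i; omega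
  exact (key d (d + d') hd₁ hd₂ (by omega)).trans (key d' (d + d') hd₁' hd₂' (by omega)).symm

theorem kostkaFoulkes_stable (n : ℕ) (lam mu : Fin n → ℤ)
    (hlam : Antitone lam) (hmu : Antitone mu) (d d' : ℕ)
    (hd₁ : ∀ i, 0 ≤ lam i + d) (hd₂ : ∀ i, 0 ≤ mu i + d)
    (hd₁' : ∀ i, 0 ≤ lam i + d') (hd₂' : ∀ i, 0 ≤ mu i + d') (k : ℕ) :
    KFcoeff n (fun i => (lam i + d).toNat) (fun i => (mu i + d).toNat) k =
    KFcoeff n (fun i => (lam i + d').toNat) (fun i => (mu i + d').toNat) k :=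
  kostkaFoulkes_stable_general n lam mu d d' hd₁ hd₂ hd₁' hd₂' k

end KP
end
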